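/- arXiv:1308.1683 — 10 statements merged into one kernel-verified Lean document; each statement's English description precedes it below -/
import Mathlib

section
/- Let a, c₂, c₃, E : ℝ → ℝ be smooth, let Θ, γ ∈ ℝ, and let H : ℝ³ → ℝ be smooth. Define the vector field Y on ℝ⁴ by Y^u = a(u), Y^v = −Θ·v + (1/4)·a''(u)·(y²+z²) + c₂'(u)·y + c₃'(u)·z + E(u), Y^y = (1/2)(a'(u)−Θ)·y + γ·z + c₂(u), Y^z = (1/2)(a'(u)−Θ)·z − γ·y + c₃(u), and set ψ(u,v,y,z) = (a'(u)−Θ)/2. Suppose that at every (u,y,z): H_{,u}(u,y,z)·a(u) + H_{,y}(u,y,z)·Y^y + H_{,z}(u,y,z)·Y^z + (1/4)·a'''(u)·(y²+z²) + c₂''(u)·y + c₃''(u)·z + E'(u) = −(a'(u)+Θ)·H(u,y,z). Then ℒ_Y g_H = 2ψ g_H, i.e. Y is a conformal Killing vector of the pp-wave metric g_H with conformal factor ψ = (a'(u)−Θ)/2. -/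
/-- Partial derivative ∂_c f at p on ℝ⁴ (coordinates (u,v,y,z) = indices 0,1,2,3). -/
noncomputable def pd (f : (Fin 4 → ℝ) → ℝ) (c : Fin 4) (p : Fin 4 → ℝ) : ℝ :=
  fderiv ℝ f p (Pi.single c 1)

/-- Lie derivative of a bilinear-form-valued map g along the vector field Y:
(ℒ_Y g)_{ij} = Σ_c Y^c ∂_c g_{ij} + Σ_c g_{cj} ∂_i Y^c + Σ_c g_{ic} ∂_j Y^c. -/
noncomputable def lieDeriv (Y : (Fin 4 → ℝ) → (Fin 4 → ℝ))
    (g : (Fin 4 → ℝ) → Fin 4 → Fin 4 → ℝ) (p : Fin 4 → ℝ) (i j : Fin 4) : ℝ :=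
  (∑ c, Y p c * pd (fun q => g q i j) c p)
  + (∑ c, g p c j * pd (fun q => Y q c) i p)
  + (∑ c, g p i c * pd (fun q => Y q c) j p)

/-- The pp-wave metric with metric function H(u,y,z):
ds² = −2 du dv − 2H du² + dy² + dz². -/
noncomputable def ppMetric (H : (Fin 3 → ℝ) → ℝ) (p : Fin 4 → ℝ) : Fin 4 → Fin 4 → ℝ :=
  fun i j =>
    if i = 0 ∧ j = 0 then -2 * H ![p 0, p 2, p 3]
    else if (i = 0 ∧ j = 1) ∨ (i = 1 ∧ j = 0) then -1
    else if (i = 2 ∧ j = 2) ∨ (i = 3 ∧ j = 3) then 1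
    else 0

/-- Partial derivative on ℝ³ (coordinates (u,y,z) = indices 0,1,2). -/
noncomputable def pd3 (f : (Fin 3 → ℝ) → ℝ) (c : Fin 3) (q : Fin 3 → ℝ) : ℝ :=
  fderiv ℝ f q (Pi.single c 1)

/-- projection onto coordinate i as a continuous linear map -/
noncomputable def prj (i : Fin 4) : (Fin 4 → ℝ) →L[ℝ] ℝ :=
  ContinuousLinearMap.proj i

lemma hq (i : Fin 4) (p : Fin 4 → ℝ) : HasFDerivAt (fun q : Fin 4 → ℝ => q i) (prj i) p :=
  (prj i).hasFDerivAt

lemma hcomp (f : ℝ → ℝ) (p : Fin 4 → ℝ) (i : Fin 4) (hf : DifferentiableAt ℝ f (p i)) :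
    HasFDerivAt (fun q : Fin 4 → ℝ => f (q i)) (deriv f (p i) • prj i) p :=
  hf.hasDerivAt.comp_hasFDerivAt p (hq i p)

lemma hsq (i : Fin 4) (p : Fin 4 → ℝ) :
    HasFDerivAt (fun q : Fin 4 → ℝ => q i ^ 2) ((2 * p i) • prj i) p := by
  have := (hasDerivAt_pow 2 (p i)).comp_hasFDerivAt p (hq i p)
  simpa [Function.comp_def] using this

lemma pd_const (r : ℝ) (c : Fin 4) (p : Fin 4 → ℝ) : pd (fun _ => r) c p = 0 := by
  simp [pd]

lemma pd_comp (f : ℝ → ℝ) (p : Fin 4 → ℝ) (i : Fin 4) (hf : DifferentiableAt ℝ f (p i))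
    (c : Fin 4) :
    pd (fun q : Fin 4 → ℝ => f (q i)) c p
      = deriv f (p i) * (Pi.single c 1 : Fin 4 → ℝ) i := by
  simp only [pd]
  rw [(hcomp f p i hf).fderiv]
  simp [prj]

noncomputable def T3 : (Fin 4 → ℝ) →L[ℝ] (Fin 3 → ℝ) :=
  ContinuousLinearMap.pi (fun j => prj (![0, 2, 3] j))

lemma T3_apply (q : Fin 4 → ℝ) : T3 q = ![q 0, q 2, q 3] := by
  funext j; fin_cases j <;> simp [T3, prj]

lemma fderiv3_eq (H : (Fin 3 → ℝ) → ℝ) (X v : Fin 3 → ℝ) :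
    fderiv ℝ H X v = v 0 * pd3 H 0 X + v 1 * pd3 H 1 X + v 2 * pd3 H 2 X := by
  have hv : v = v 0 • (Pi.single 0 1 : Fin 3 → ℝ) + v 1 • (Pi.single 1 1 : Fin 3 → ℝ)
      + v 2 • (Pi.single 2 1 : Fin 3 → ℝ) := by
    funext j; fin_cases j <;> simp [Pi.single_apply]
  conv_lhs => rw [hv]
  simp only [map_add, map_smul, smul_eq_mul, pd3]

lemma pd_g00 (H : (Fin 3 → ℝ) → ℝ) (hH : Differentiable ℝ H) (p : Fin 4 → ℝ) (c : Fin 4) :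
    pd (fun q : Fin 4 → ℝ => -2 * H ![q 0, q 2, q 3]) c p
    = -2 * (pd3 H 0 ![p 0, p 2, p 3] * (Pi.single c 1 : Fin 4 → ℝ) 0
          + pd3 H 1 ![p 0, p 2, p 3] * (Pi.single c 1 : Fin 4 → ℝ) 2
          + pd3 H 2 ![p 0, p 2, p 3] * (Pi.single c 1 : Fin 4 → ℝ) 3) := by
  have hT : HasFDerivAt (fun q : Fin 4 → ℝ => (![q 0, q 2, q 3] : Fin 3 → ℝ)) T3 p := by
    have h := T3.hasFDerivAt (x := p)
    have he : ⇑T3 = fun q : Fin 4 → ℝ => (![q 0, q 2, q 3] : Fin 3 → ℝ) := by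
      funext q; exact T3_apply q
    rwa [he] at h
  have hH' : HasFDerivAt H (fderiv ℝ H ![p 0, p 2, p 3]) ![p 0, p 2, p 3] :=
    (hH ![p 0, p 2, p 3]).hasFDerivAt
  have h : HasFDerivAt (fun q : Fin 4 → ℝ => -2 * H ![q 0, q 2, q 3])
      ((-2 : ℝ) • ((fderiv ℝ H ![p 0, p 2, p 3]).comp T3)) p := by
    exact (hH'.comp p hT).const_mul (-2)
  simp only [pd]
  rw [h.fderiv]
  simp only [ContinuousLinearMap.smul_apply, ContinuousLinearMap.coe_comp', Function.comp_apply,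
    smul_eq_mul]
  rw [T3_apply, fderiv3_eq]
  simp only [Matrix.cons_val_zero, Matrix.cons_val_one, Matrix.head_cons, Matrix.cons_val_two,
    Matrix.tail_cons]
  ring

lemma ppM (H : (Fin 3 → ℝ) → ℝ) (q : Fin 4 → ℝ) :
    ppMetric H q = ![![-2 * H ![q 0, q 2, q 3], -1, 0, 0],
      ![-1, 0, 0, 0], ![0, 0, 1, 0], ![0, 0, 0, 1]] := by
  funext i j
  fin_cases i <;> fin_cases j <;>
    simp [ppMetric, Matrix.vecHead, Matrix.vecTail]

/-- the vector field Y of the stated form, subject to the condition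
H_{,u}·Y^u + H_{,y}·Y^y + H_{,z}·Y^z + a'''(y²+z²)/4 + c₂''y + c₃''z + E' = −(a'+Θ)H,
is a conformal Killing vector of the pp-wave metric g_H with ψ = (a'(u)−Θ)/2. -/
theorem ckv_of_ppwave_metric
    (a c₂ c₃ E : ℝ → ℝ) (Θ γ : ℝ) (H : (Fin 3 → ℝ) → ℝ)
    (ha : ContDiff ℝ (⊤ : ℕ∞) a) (hc₂ : ContDiff ℝ (⊤ : ℕ∞) c₂) (hc₃ : ContDiff ℝ (⊤ : ℕ∞) c₃)
    (hE : ContDiff ℝ (⊤ : ℕ∞) E) (hH : ContDiff ℝ (⊤ : ℕ∞) H)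
    (Y : (Fin 4 → ℝ) → (Fin 4 → ℝ))
    (hY : Y = fun p => ![a (p 0),
        -Θ * p 1 + (1 / 4) * deriv (deriv a) (p 0) * ((p 2) ^ 2 + (p 3) ^ 2)
          + deriv c₂ (p 0) * p 2 + deriv c₃ (p 0) * p 3 + E (p 0),
        (1 / 2) * (deriv a (p 0) - Θ) * p 2 + γ * p 3 + c₂ (p 0),
        (1 / 2) * (deriv a (p 0) - Θ) * p 3 - γ * p 2 + c₃ (p 0)])
    (hcond : ∀ u y z : ℝ,
        pd3 H 0 ![u, y, z] * a u
        + pd3 H 1 ![u, y, z] * ((1 / 2) * (deriv a u - Θ) * y + γ * z + c₂ u)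
        + pd3 H 2 ![u, y, z] * ((1 / 2) * (deriv a u - Θ) * z - γ * y + c₃ u)
        + (1 / 4) * deriv (deriv (deriv a)) u * (y ^ 2 + z ^ 2)
        + deriv (deriv c₂) u * y + deriv (deriv c₃) u * z + deriv E u
        = -(deriv a u + Θ) * H ![u, y, z]) :
    ∀ p i j, lieDeriv Y (ppMetric H) p i j
      = 2 * ((deriv a (p 0) - Θ) / 2) * ppMetric H p i j := by
  subst hY
  intro p i j
  have hda : Differentiable ℝ a := ha.differentiable (by simp)
  have ha1 : ContDiff ℝ ((⊤ : ℕ∞) : WithTop ℕ∞) (deriv a) := (contDiff_infty_iff_deriv.mp (ha.of_le (by simp))).2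
  have hda1 : Differentiable ℝ (deriv a) := ha1.differentiable (by simp)
  have ha2 : ContDiff ℝ ((⊤ : ℕ∞) : WithTop ℕ∞) (deriv (deriv a)) := (contDiff_infty_iff_deriv.mp ha1).2
  have hda2 : Differentiable ℝ (deriv (deriv a)) := ha2.differentiable (by simp)
  have hdc2 : Differentiable ℝ c₂ := hc₂.differentiable (by simp)
  have hdc21 : Differentiable ℝ (deriv c₂) :=
    ((contDiff_infty_iff_deriv.mp (hc₂.of_le (by simp))).2).differentiable (by simp)
  have hdc3 : Differentiable ℝ c₃ := hc₃.differentiable (by simp)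
  have hdc31 : Differentiable ℝ (deriv c₃) :=
    ((contDiff_infty_iff_deriv.mp (hc₃.of_le (by simp))).2).differentiable (by simp)
  have hdE : Differentiable ℝ E := hE.differentiable (by simp)
  -- pd of the metric component g00
  have pdg : ∀ c, pd (fun q : Fin 4 → ℝ => -2 * H ![q 0, q 2, q 3]) c p
      = -2 * (pd3 H 0 ![p 0, p 2, p 3] * (Pi.single c 1 : Fin 4 → ℝ) 0
            + pd3 H 1 ![p 0, p 2, p 3] * (Pi.single c 1 : Fin 4 → ℝ) 2
            + pd3 H 2 ![p 0, p 2, p 3] * (Pi.single c 1 : Fin 4 → ℝ) 3) :=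
    fun c => pd_g00 H (hH.differentiable (by simp)) p c
  -- pd of Y⁰
  have pdY0 : ∀ c, pd (fun q : Fin 4 → ℝ => a (q 0)) c p
      = deriv a (p 0) * (Pi.single c 1 : Fin 4 → ℝ) 0 :=
    fun c => pd_comp a p 0 (hda _) c
  -- pd of Y¹
  have pdY1 : ∀ c, pd (fun q : Fin 4 → ℝ =>
        -Θ * q 1 + 1 / 4 * deriv (deriv a) (q 0) * (q 2 ^ 2 + q 3 ^ 2)
          + deriv c₂ (q 0) * q 2 + deriv c₃ (q 0) * q 3 + E (q 0)) c p
      = -Θ * (Pi.single c 1 : Fin 4 → ℝ) 1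
        + (1 / 4 * deriv (deriv (deriv a)) (p 0) * (p 2 ^ 2 + p 3 ^ 2)
            + deriv (deriv c₂) (p 0) * p 2 + deriv (deriv c₃) (p 0) * p 3 + deriv E (p 0))
          * (Pi.single c 1 : Fin 4 → ℝ) 0
        + (1 / 2 * deriv (deriv a) (p 0) * p 2 + deriv c₂ (p 0))
          * (Pi.single c 1 : Fin 4 → ℝ) 2
        + (1 / 2 * deriv (deriv a) (p 0) * p 3 + deriv c₃ (p 0))
          * (Pi.single c 1 : Fin 4 → ℝ) 3 := by
    intro c
    have h : HasFDerivAt (fun q : Fin 4 → ℝ =>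
        -Θ * q 1 + 1 / 4 * deriv (deriv a) (q 0) * (q 2 ^ 2 + q 3 ^ 2)
          + deriv c₂ (q 0) * q 2 + deriv c₃ (q 0) * q 3 + E (q 0)) _ p :=
      (((((hq 1 p).const_mul (-Θ)).add
          (((hcomp (deriv (deriv a)) p 0 (hda2 _)).const_mul (1/4)).mul
            ((hsq 2 p).add (hsq 3 p)))).add
        ((hcomp (deriv c₂) p 0 (hdc21 _)).mul (hq 2 p))).add
        ((hcomp (deriv c₃) p 0 (hdc31 _)).mul (hq 3 p))).add
        (hcomp E p 0 (hdE _))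
    simp only [pd]
    rw [h.fderiv]
    simp only [ContinuousLinearMap.add_apply, ContinuousLinearMap.smul_apply, prj,
      ContinuousLinearMap.proj_apply, smul_eq_mul, Pi.add_apply]
    ring
  -- pd of Y²
  have pdY2 : ∀ c, pd (fun q : Fin 4 → ℝ =>
        1 / 2 * (deriv a (q 0) - Θ) * q 2 + γ * q 3 + c₂ (q 0)) c p
      = 1 / 2 * (deriv a (p 0) - Θ) * (Pi.single c 1 : Fin 4 → ℝ) 2
        + (1 / 2 * deriv (deriv a) (p 0) * p 2 + deriv c₂ (p 0))
          * (Pi.single c 1 : Fin 4 → ℝ) 0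
        + γ * (Pi.single c 1 : Fin 4 → ℝ) 3 := by
    intro c
    have h : HasFDerivAt (fun q : Fin 4 → ℝ =>
        1 / 2 * (deriv a (q 0) - Θ) * q 2 + γ * q 3 + c₂ (q 0)) _ p :=
      ((((hcomp (deriv a) p 0 (hda1 _)).sub_const Θ).const_mul (1/2)).mul (hq 2 p)).add
        ((hq 3 p).const_mul γ) |>.add (hcomp c₂ p 0 (hdc2 _))
    simp only [pd]
    rw [h.fderiv]
    simp only [ContinuousLinearMap.add_apply, ContinuousLinearMap.smul_apply, prj,
      ContinuousLinearMap.proj_apply, smul_eq_mul]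
    ring
  -- pd of Y³
  have pdY3 : ∀ c, pd (fun q : Fin 4 → ℝ =>
        1 / 2 * (deriv a (q 0) - Θ) * q 3 - γ * q 2 + c₃ (q 0)) c p
      = 1 / 2 * (deriv a (p 0) - Θ) * (Pi.single c 1 : Fin 4 → ℝ) 3
        + (1 / 2 * deriv (deriv a) (p 0) * p 3 + deriv c₃ (p 0))
          * (Pi.single c 1 : Fin 4 → ℝ) 0
        - γ * (Pi.single c 1 : Fin 4 → ℝ) 2 := by
    intro c
    have h : HasFDerivAt (fun q : Fin 4 → ℝ =>
        1 / 2 * (deriv a (q 0) - Θ) * q 3 - γ * q 2 + c₃ (q 0)) _ p :=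
      ((((hcomp (deriv a) p 0 (hda1 _)).sub_const Θ).const_mul (1/2)).mul (hq 3 p)).sub
        ((hq 2 p).const_mul γ) |>.add (hcomp c₃ p 0 (hdc3 _))
    simp only [pd]
    rw [h.fderiv]
    simp only [ContinuousLinearMap.add_apply, ContinuousLinearMap.sub_apply,
      ContinuousLinearMap.smul_apply, prj, ContinuousLinearMap.proj_apply, smul_eq_mul]
    ring
  have hc := hcond (p 0) (p 2) (p 3)
  fin_cases i <;> fin_cases j <;>
    · simp only [lieDeriv, Fin.sum_univ_four, ppM, Matrix.cons_val_zero, Matrix.cons_val_one,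
        Matrix.head_cons, Matrix.cons_val_two, Matrix.tail_cons, Matrix.cons_val_three,
        Nat.succ_eq_add_one, Nat.reduceAdd, Fin.isValue, Fin.reduceFinMk]
      simp only [pdg, pdY0, pdY1, pdY2, pdY3, pd_const]
      simp [Pi.single_apply]
      try first
      | linear_combination (-2 : ℝ) * hc
      | ring
end

section
/- For each smooth function f : ℝ → ℝ define the vector field Y_f on ℝ⁴ by Y_f(u,v,y,z) = (f(u), (1/4)·f''(u)·(y²+z²), (1/2)·f'(u)·y, (1/2)·f'(u)·z). Then for all smooth f, g : ℝ → ℝ the Lie bracket satisfies [Y_f, Y_g] = Y_{f·g' − g·f'}, i.e. the bracket of Y_f and Y_g is the vector field of the same form associated with the Wronskian f g' − g f'. -/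
/-- Lie bracket of vector fields on ℝ⁴: [V,W](p) = DW_p(V(p)) − DV_p(W(p)). -/
noncomputable def lieBracket (V W : (Fin 4 → ℝ) → (Fin 4 → ℝ)) (p : Fin 4 → ℝ) : Fin 4 → ℝ :=
  fderiv ℝ W p (V p) - fderiv ℝ V p (W p)


open ContinuousLinearMap

noncomputable abbrev pr (i : Fin 4) : (Fin 4 → ℝ) →L[ℝ] ℝ := ContinuousLinearMap.proj i

lemma comp0 {h : ℝ → ℝ} {p : Fin 4 → ℝ} (hd : DifferentiableAt ℝ h (p 0)) :
    HasFDerivAt (fun q : Fin 4 → ℝ => h (q 0)) (deriv h (p 0) • pr 0) p :=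
  hd.hasDerivAt.comp_hasFDerivAt p (hasFDerivAt_apply 0 p)

lemma key {h : ℝ → ℝ} (hh : ContDiff ℝ (⊤ : ℕ∞) h) (p w : Fin 4 → ℝ) :
    fderiv ℝ (fun q : Fin 4 → ℝ => ![h (q 0),
        (1 / 4) * deriv (deriv h) (q 0) * ((q 2) ^ 2 + (q 3) ^ 2),
        (1 / 2) * deriv h (q 0) * q 2,
        (1 / 2) * deriv h (q 0) * q 3]) p w
    = ![deriv h (p 0) * w 0,
        (1/4) * deriv (deriv (deriv h)) (p 0) * ((p 2)^2 + (p 3)^2) * w 0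
          + (1/4) * deriv (deriv h) (p 0) * (2 * p 2 * w 2 + 2 * p 3 * w 3),
        (1/2) * deriv (deriv h) (p 0) * p 2 * w 0 + (1/2) * deriv h (p 0) * w 2,
        (1/2) * deriv (deriv h) (p 0) * p 3 * w 0 + (1/2) * deriv h (p 0) * w 3] := by
  have hi : ContDiff ℝ (⊤ : ℕ∞) h := hh.of_le (by simp)
  have h0 : Differentiable ℝ h := hi.differentiable (by simp)
  have h1 : Differentiable ℝ (deriv h) := (hi.iterate_deriv 1).differentiable (by simp)
  have h2 : Differentiable ℝ (deriv (deriv h)) := (hi.iterate_deriv 2).differentiable (by simp)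
  have D0 : HasFDerivAt (fun q : Fin 4 → ℝ => h (q 0)) (deriv h (p 0) • pr 0) p :=
    comp0 (h0 _)
  have Ds : HasFDerivAt (fun q : Fin 4 → ℝ => (q 2) ^ 2 + (q 3) ^ 2)
      ((p 2 • pr 2 + p 2 • pr 2) + (p 3 • pr 3 + p 3 • pr 3)) p := by
    have h2 : HasFDerivAt (fun q : Fin 4 → ℝ => q 2 * q 2) (p 2 • pr 2 + p 2 • pr 2) p :=
      (hasFDerivAt_apply 2 p).mul (hasFDerivAt_apply 2 p)
    have h3 : HasFDerivAt (fun q : Fin 4 → ℝ => q 3 * q 3) (p 3 • pr 3 + p 3 • pr 3) p :=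
      (hasFDerivAt_apply 3 p).mul (hasFDerivAt_apply 3 p)
    simp only [pow_two]; exact h2.add h3
  have D1 : HasFDerivAt
      (fun q : Fin 4 → ℝ => (1 / 4) * deriv (deriv h) (q 0) * ((q 2) ^ 2 + (q 3) ^ 2))
      (((1/4 : ℝ) * deriv (deriv h) (p 0)) • ((p 2 • pr 2 + p 2 • pr 2) + (p 3 • pr 3 + p 3 • pr 3))
        + ((p 2)^2 + (p 3)^2) • ((1/4 : ℝ) • (deriv (deriv (deriv h)) (p 0) • pr 0))) p :=
    ((comp0 (h2 _)).const_mul (1/4 : ℝ)).mul Ds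
  have D2 : HasFDerivAt (fun q : Fin 4 → ℝ => (1 / 2) * deriv h (q 0) * q 2)
      (((1/2 : ℝ) * deriv h (p 0)) • pr 2
        + p 2 • ((1/2 : ℝ) • (deriv (deriv h) (p 0) • pr 0))) p :=
    ((comp0 (h1 _)).const_mul (1/2 : ℝ)).mul (hasFDerivAt_apply 2 p)
  have D3 : HasFDerivAt (fun q : Fin 4 → ℝ => (1 / 2) * deriv h (q 0) * q 3)
      (((1/2 : ℝ) * deriv h (p 0)) • pr 3
        + p 3 • ((1/2 : ℝ) • (deriv (deriv h) (p 0) • pr 0))) p :=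
    ((comp0 (h1 _)).const_mul (1/2 : ℝ)).mul (hasFDerivAt_apply 3 p)
  have main : HasFDerivAt (fun q : Fin 4 → ℝ => ![h (q 0),
        (1 / 4) * deriv (deriv h) (q 0) * ((q 2) ^ 2 + (q 3) ^ 2),
        (1 / 2) * deriv h (q 0) * q 2,
        (1 / 2) * deriv h (q 0) * q 3])
      (ContinuousLinearMap.pi ![deriv h (p 0) • pr 0,
        ((1/4 : ℝ) * deriv (deriv h) (p 0)) • ((p 2 • pr 2 + p 2 • pr 2) + (p 3 • pr 3 + p 3 • pr 3))
          + ((p 2)^2 + (p 3)^2) • ((1/4 : ℝ) • (deriv (deriv (deriv h)) (p 0) • pr 0)),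
        ((1/2 : ℝ) * deriv h (p 0)) • pr 2 + p 2 • ((1/2 : ℝ) • (deriv (deriv h) (p 0) • pr 0)),
        ((1/2 : ℝ) * deriv h (p 0)) • pr 3 + p 3 • ((1/2 : ℝ) • (deriv (deriv h) (p 0) • pr 0))]) p := by
    apply hasFDerivAt_pi''
    intro i
    fin_cases i <;>
      simp only [ContinuousLinearMap.proj_pi, Matrix.cons_val_zero, Matrix.cons_val_one,
        Matrix.head_cons, Matrix.cons_val_two, Matrix.tail_cons, Matrix.cons_val_three] <;>
      [exact D0; exact D1; exact D2; exact D3]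
  rw [main.fderiv]
  funext i
  fin_cases i <;>
    simp [ContinuousLinearMap.pi_apply, ContinuousLinearMap.add_apply,
      ContinuousLinearMap.smul_apply, ContinuousLinearMap.proj_apply, smul_eq_mul] <;>
    ring


/-- [Y_f, Y_g] = Y_{f·g' − g·f'} for the family of vector fields
Y_f = (f(u), f''(u)(y²+z²)/4, f'(u)y/2, f'(u)z/2). -/
theorem lie_bracket_wronskian
    (Yf : (ℝ → ℝ) → (Fin 4 → ℝ) → (Fin 4 → ℝ))
    (hYf : Yf = fun f p => ![f (p 0),
        (1 / 4) * deriv (deriv f) (p 0) * ((p 2) ^ 2 + (p 3) ^ 2),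
        (1 / 2) * deriv f (p 0) * p 2,
        (1 / 2) * deriv f (p 0) * p 3]) :
    ∀ f g : ℝ → ℝ, ContDiff ℝ (⊤ : ℕ∞) f → ContDiff ℝ (⊤ : ℕ∞) g →
      lieBracket (Yf f) (Yf g) = Yf (fun u => f u * deriv g u - g u * deriv f u) := by
  intro f g hf hg
  subst hYf
  have hfi : ContDiff ℝ (⊤ : ℕ∞) f := hf.of_le (by simp)
  have hgi : ContDiff ℝ (⊤ : ℕ∞) g := hg.of_le (by simp)
  have df0 : Differentiable ℝ f := hfi.differentiable (by simp)
  have dg0 : Differentiable ℝ g := hgi.differentiable (by simp)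
  have df1 : Differentiable ℝ (deriv f) := (hfi.iterate_deriv 1).differentiable (by simp)
  have dg1 : Differentiable ℝ (deriv g) := (hgi.iterate_deriv 1).differentiable (by simp)
  have df2 : Differentiable ℝ (deriv (deriv f)) :=
    (hfi.iterate_deriv 2).differentiable (by simp)
  have dg2 : Differentiable ℝ (deriv (deriv g)) :=
    (hgi.iterate_deriv 2).differentiable (by simp)
  have hW1 : deriv (fun u => f u * deriv g u - g u * deriv f u)
      = fun u => f u * deriv (deriv g) u - g u * deriv (deriv f) u := by
    funext u
    rw [deriv_fun_sub (f := fun u => f u * deriv g u) (g := fun u => g u * deriv f u) ((df0 u).mul (dg1 u)) ((dg0 u).mul (df1 u)),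
      deriv_fun_mul (df0 u) (dg1 u), deriv_fun_mul (dg0 u) (df1 u)]
    ring
  have hW2 : deriv (deriv (fun u => f u * deriv g u - g u * deriv f u))
      = fun u => (deriv f u * deriv (deriv g) u + f u * deriv (deriv (deriv g)) u)
        - (deriv g u * deriv (deriv f) u + g u * deriv (deriv (deriv f)) u) := by
    rw [hW1]
    funext u
    rw [deriv_fun_sub (f := fun u => f u * deriv (deriv g) u) (g := fun u => g u * deriv (deriv f) u) ((df0 u).mul (dg2 u)) ((dg0 u).mul (df2 u)),
      deriv_fun_mul (df0 u) (dg2 u), deriv_fun_mul (dg0 u) (df2 u)]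
  funext p
  simp only [lieBracket]
  rw [key hg, key hf, hW2, hW1]
  funext i
  fin_cases i <;>
    simp [Matrix.cons_val_zero, Matrix.cons_val_one, Matrix.head_cons,
      Matrix.cons_val_two, Matrix.tail_cons, Matrix.cons_val_three, Pi.sub_apply] <;>
    ring
end

section
/- Let ρ, α, β, k, ω ∈ ℝ with 4ρβ − α² + 8k = ω², set p(u) = ρu² + αu + β and τ(u) = k·p(u)⁻². Let I be an open interval on which p(u) ≠ 0, and let Φ : I → ℝ be a differentiable function with Φ'(u) = p(u)⁻¹ on I. Then both a(u) = p(u)·sin(ω·Φ(u)) and a(u) = p(u)·cos(ω·Φ(u)) satisfy a'''(u) + 8τ(u)·a'(u) + 4τ'(u)·a(u) = 0 on I. -/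
/-- Left-hand side of the third-order ODE a''' + 8τ a' + 4τ' a = 0 governing
the u-dependence of conformal Killing vectors of type N pp-wave spacetimes. -/
noncomputable def odeLHS (τ a : ℝ → ℝ) (u : ℝ) : ℝ :=
  deriv (deriv (deriv a)) u + 8 * τ u * deriv a u + 4 * deriv τ u * a u

set_option maxHeartbeats 1600000 in
set_option maxRecDepth 8000 in
lemma ode_key (ρ α β k ω : ℝ)
    (hω : 4 * ρ * β - α ^ 2 + 8 * k = ω ^ 2)
    (c d : ℝ) (hp : ∀ u ∈ Set.Ioo c d, ρ * u ^ 2 + α * u + β ≠ 0)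
    (Φ : ℝ → ℝ)
    (hΦ : ∀ u ∈ Set.Ioo c d, HasDerivAt Φ ((ρ * u ^ 2 + α * u + β)⁻¹) u)
    (f g : ℝ → ℝ) (hf : ∀ x, HasDerivAt f (g x) x) (hg : ∀ x, HasDerivAt g (-(f x)) x) :
    ∀ u ∈ Set.Ioo c d,
      odeLHS (fun u => k * ((ρ * u ^ 2 + α * u + β) ^ 2)⁻¹)
        (fun u => (ρ * u ^ 2 + α * u + β) * f (ω * Φ u)) u = 0 := by
  set P : ℝ → ℝ := fun u => ρ * u ^ 2 + α * u + β with hPdef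
  have hP : ∀ u : ℝ, HasDerivAt P (2 * ρ * u + α) u := by
    intro u
    have : HasDerivAt (fun u : ℝ => ρ * u ^ 2 + α * u + β)
        (ρ * (2 * u ^ 1) + α * 1) u := by
      exact (((hasDerivAt_pow 2 u).const_mul ρ).add ((hasDerivAt_id u).const_mul α)).add_const β
    convert this using 1
    ring
  -- derivative of f ∘ (ω Φ)
  have hF : ∀ u ∈ Set.Ioo c d,
      HasDerivAt (fun u => f (ω * Φ u)) (g (ω * Φ u) * (ω * (P u)⁻¹)) u := by
    intro u hu
    exact (hf _).comp u ((hΦ u hu).const_mul ω)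
  have hG : ∀ u ∈ Set.Ioo c d,
      HasDerivAt (fun u => g (ω * Φ u)) (-(f (ω * Φ u)) * (ω * (P u)⁻¹)) u := by
    intro u hu
    exact (hg _).comp u ((hΦ u hu).const_mul ω)
  set a1 : ℝ → ℝ := fun u => (2 * ρ * u + α) * f (ω * Φ u) + ω * g (ω * Φ u) with ha1def
  have hA1 : ∀ u ∈ Set.Ioo c d,
      HasDerivAt (fun u => P u * f (ω * Φ u)) (a1 u) u := by
    intro u hu
    have := (hP u).mul (hF u hu)
    refine this.congr_deriv ?_
    have h0 := hp u hu
    have h0' : P u ≠ 0 := h0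
    simp only [ha1def]
    field_simp
  set a2 : ℝ → ℝ := fun u => 2 * ρ * f (ω * Φ u)
      + ω * ((2 * ρ * u + α) * ((P u)⁻¹ * g (ω * Φ u)))
      - ω ^ 2 * ((P u)⁻¹ * f (ω * Φ u)) with ha2def
  have hA2 : ∀ u ∈ Set.Ioo c d, HasDerivAt a1 (a2 u) u := by
    intro u hu
    have h1 : HasDerivAt (fun u : ℝ => 2 * ρ * u + α) (2 * ρ) u := by
      simpa using ((hasDerivAt_id u).const_mul (2 * ρ)).add_const α
    have := (h1.mul (hF u hu)).add ((hG u hu).const_mul ω)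
    refine this.congr_deriv ?_
    simp only [ha2def]
    ring
  -- inverse of P
  have hPinv : ∀ u ∈ Set.Ioo c d,
      HasDerivAt (fun u => (P u)⁻¹) (-(2 * ρ * u + α) / (P u) ^ 2) u := by
    intro u hu
    exact (hP u).inv (hp u hu)
  set a3 : ℝ → ℝ := fun u =>
      2 * ρ * (g (ω * Φ u) * (ω * (P u)⁻¹))
      + ω * (2 * ρ * ((P u)⁻¹ * g (ω * Φ u))
          + (2 * ρ * u + α) * (-(2 * ρ * u + α) / (P u) ^ 2 * g (ω * Φ u)
              + (P u)⁻¹ * (-(f (ω * Φ u)) * (ω * (P u)⁻¹))))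
      - ω ^ 2 * (-(2 * ρ * u + α) / (P u) ^ 2 * f (ω * Φ u)
          + (P u)⁻¹ * (g (ω * Φ u) * (ω * (P u)⁻¹))) with ha3def
  have hA3 : ∀ u ∈ Set.Ioo c d, HasDerivAt a2 (a3 u) u := by
    intro u hu
    have h1 : HasDerivAt (fun u : ℝ => 2 * ρ * u + α) (2 * ρ) u := by
      simpa using ((hasDerivAt_id u).const_mul (2 * ρ)).add_const α
    exact (((hF u hu).const_mul (2 * ρ)).add
      ((h1.mul ((hPinv u hu).mul (hG u hu))).const_mul ω)).sub
      ((((hPinv u hu).mul (hF u hu))).const_mul (ω ^ 2))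
  -- derivative of tau
  have hτ : ∀ u ∈ Set.Ioo c d,
      HasDerivAt (fun u => k * ((P u) ^ 2)⁻¹)
        (k * (-(2 * P u ^ 1 * (2 * ρ * u + α)) / (P u ^ 2) ^ 2)) u := by
    intro u hu
    exact (((hP u).pow 2).inv (pow_ne_zero 2 (hp u hu))).const_mul k
  intro u hu
  have hIoo : Set.Ioo c d ∈ nhds u := (isOpen_Ioo).mem_nhds hu
  -- deriv a = a1 on Ioo
  have hd1 : Set.EqOn (deriv (fun u => P u * f (ω * Φ u))) a1 (Set.Ioo c d) :=
    fun v hv => (hA1 v hv).deriv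
  have hd1' : deriv (fun u => P u * f (ω * Φ u)) =ᶠ[nhds u] a1 :=
    Filter.eventuallyEq_of_mem hIoo hd1
  have hdd : deriv (deriv (fun u => P u * f (ω * Φ u))) =ᶠ[nhds u] deriv a1 := hd1'.deriv
  have hd2 : Set.EqOn (deriv a1) a2 (Set.Ioo c d) := fun v hv => (hA2 v hv).deriv
  have hd2' : deriv a1 =ᶠ[nhds u] a2 := Filter.eventuallyEq_of_mem hIoo hd2
  have e3 : deriv (deriv (deriv (fun u => P u * f (ω * Φ u)))) u = a3 u := by
    have : deriv (deriv (fun u => P u * f (ω * Φ u))) =ᶠ[nhds u] a2 := hdd.trans hd2'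
    rw [this.deriv_eq, (hA3 u hu).deriv]
  have eτ : deriv (fun u => k * ((P u) ^ 2)⁻¹) u
      = k * (-(2 * P u ^ 1 * (2 * ρ * u + α)) / (P u ^ 2) ^ 2) := (hτ u hu).deriv
  have e1 : deriv (fun u => P u * f (ω * Φ u)) u = a1 u := (hA1 u hu).deriv
  show deriv (deriv (deriv (fun u => P u * f (ω * Φ u)))) u
      + 8 * (k * ((P u) ^ 2)⁻¹) * deriv (fun u => P u * f (ω * Φ u)) u
      + 4 * deriv (fun u => k * ((P u) ^ 2)⁻¹) u * (P u * f (ω * Φ u)) = 0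
  rw [e3, eτ, e1]
  simp only [ha1def, ha3def]
  have h0 := hp u hu
  have hq : P u = ρ * u ^ 2 + α * u + β := rfl
  set S := f (ω * Φ u) with hS
  set G := g (ω * Φ u) with hG'
  set q := P u with hq'
  clear_value S G q
  have h0' : q ≠ 0 := hq ▸ h0
  field_simp
  linear_combination (ω * G) * hω + (4 * ρ * ω * G) * hq

/-- with 4ρβ − α² + 8k = ω², p(u) = ρu²+αu+β, τ = k·p⁻², and Φ' = p⁻¹ on an
open interval where p ≠ 0, both a = p·sin(ωΦ) and a = p·cos(ωΦ) solve a''' + 8τa' + 4τ'a = 0. -/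
theorem ode_solutions_trigonometric (ρ α β k ω : ℝ)
    (hω : 4 * ρ * β - α ^ 2 + 8 * k = ω ^ 2)
    (c d : ℝ) (hp : ∀ u ∈ Set.Ioo c d, ρ * u ^ 2 + α * u + β ≠ 0)
    (Φ : ℝ → ℝ)
    (hΦ : ∀ u ∈ Set.Ioo c d, HasDerivAt Φ ((ρ * u ^ 2 + α * u + β)⁻¹) u) :
    ∀ u ∈ Set.Ioo c d,
      odeLHS (fun u => k * ((ρ * u ^ 2 + α * u + β) ^ 2)⁻¹)
        (fun u => (ρ * u ^ 2 + α * u + β) * Real.sin (ω * Φ u)) u = 0 ∧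
      odeLHS (fun u => k * ((ρ * u ^ 2 + α * u + β) ^ 2)⁻¹)
        (fun u => (ρ * u ^ 2 + α * u + β) * Real.cos (ω * Φ u)) u = 0 := by
  intro u hu
  refine ⟨ode_key ρ α β k ω hω c d hp Φ hΦ Real.sin Real.cos
      (fun x => Real.hasDerivAt_sin x) (fun x => by simpa using Real.hasDerivAt_cos x) u hu,
    ode_key ρ α β k ω hω c d hp Φ hΦ Real.cos (fun x => -Real.sin x)
      (fun x => Real.hasDerivAt_cos x) (fun x => by exact (Real.hasDerivAt_sin x).neg) u hu⟩
end

section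
/- Let ρ, α, β, k, ω ∈ ℝ with 4ρβ − α² + 8k = −ω², set p(u) = ρu² + αu + β and τ(u) = k·p(u)⁻². Let I be an open interval on which p(u) ≠ 0, and let Φ : I → ℝ be a differentiable function with Φ'(u) = p(u)⁻¹ on I. Then both a(u) = p(u)·sinh(ω·Φ(u)) and a(u) = p(u)·cosh(ω·Φ(u)) satisfy a'''(u) + 8τ(u)·a'(u) + 4τ'(u)·a(u) = 0 on I. -/
set_option maxHeartbeats 1000000

lemma key_ode (ρ α β k ω c d : ℝ)
    (hω : 4 * ρ * β - α ^ 2 + 8 * k = -ω ^ 2)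
    (hp : ∀ u ∈ Set.Ioo c d, ρ * u ^ 2 + α * u + β ≠ 0)
    (S C : ℝ → ℝ)
    (hS : ∀ u ∈ Set.Ioo c d, HasDerivAt S (ω * (ρ * u ^ 2 + α * u + β)⁻¹ * C u) u)
    (hC : ∀ u ∈ Set.Ioo c d, HasDerivAt C (ω * (ρ * u ^ 2 + α * u + β)⁻¹ * S u) u) :
    ∀ u ∈ Set.Ioo c d,
      odeLHS (fun u => k * ((ρ * u ^ 2 + α * u + β) ^ 2)⁻¹)
        (fun u => (ρ * u ^ 2 + α * u + β) * S u) u = 0 := by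
  have hP : ∀ u : ℝ, HasDerivAt (fun u => ρ * u ^ 2 + α * u + β) (2 * ρ * u + α) u := by
    intro u
    have h := (((hasDerivAt_pow 2 u).const_mul ρ).add ((hasDerivAt_id u).const_mul α)).add_const β
    refine h.congr_deriv ?_
    ring
  have hlin : ∀ u : ℝ, HasDerivAt (fun u => 2 * ρ * u + α) (2 * ρ) u := by
    intro u
    simpa using ((hasDerivAt_id u).const_mul (2 * ρ)).add_const α
  have ha' : ∀ u ∈ Set.Ioo c d,
      HasDerivAt (fun u => (ρ * u ^ 2 + α * u + β) * S u)
        ((2 * ρ * u + α) * S u + ω * C u) u := by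
    intro u hu
    have h := (hP u).mul (hS u hu)
    refine h.congr_deriv ?_
    have hq := hp u hu
    generalize ρ * u ^ 2 + α * u + β = q at hq ⊢
    field_simp [hq]
  have hf1' : ∀ u ∈ Set.Ioo c d,
      HasDerivAt (fun u => (2 * ρ * u + α) * S u + ω * C u)
        ((2 * ρ + ω ^ 2 * (ρ * u ^ 2 + α * u + β)⁻¹) * S u
          + ω * (2 * ρ * u + α) * (ρ * u ^ 2 + α * u + β)⁻¹ * C u) u := by
    intro u hu
    have h := ((hlin u).mul (hS u hu)).add ((hC u hu).const_mul ω)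
    refine h.congr_deriv ?_
    field_simp [hp u hu]
    ring
  have hf2' : ∀ u ∈ Set.Ioo c d,
      HasDerivAt (fun u => (2 * ρ + ω ^ 2 * (ρ * u ^ 2 + α * u + β)⁻¹) * S u
          + ω * (2 * ρ * u + α) * (ρ * u ^ 2 + α * u + β)⁻¹ * C u)
        (ω * (4 * ρ * (ρ * u ^ 2 + α * u + β)⁻¹
          + (ω ^ 2 - (2 * ρ * u + α) ^ 2) * ((ρ * u ^ 2 + α * u + β) ^ 2)⁻¹) * C u) u := by
    intro u hu
    have hinv : HasDerivAt (fun u => (ρ * u ^ 2 + α * u + β)⁻¹)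
        (-(2 * ρ * u + α) / (ρ * u ^ 2 + α * u + β) ^ 2) u := (hP u).inv (hp u hu)
    have h := (((hinv.const_mul (ω ^ 2)).const_add (2 * ρ)).mul (hS u hu)).add
      ((((hlin u).const_mul ω).mul hinv).mul (hC u hu))
    refine h.congr_deriv ?_
    have hq := hp u hu
    simp only [Pi.mul_apply]
    generalize ρ * u ^ 2 + α * u + β = q at hq ⊢
    field_simp [hq]
    ring
  have hτ' : ∀ u ∈ Set.Ioo c d,
      HasDerivAt (fun u => k * ((ρ * u ^ 2 + α * u + β) ^ 2)⁻¹)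
        (-2 * k * (2 * ρ * u + α) * ((ρ * u ^ 2 + α * u + β) ^ 3)⁻¹) u := by
    intro u hu
    have h := (((hP u).pow 2).inv (pow_ne_zero 2 (hp u hu))).const_mul k
    refine h.congr_deriv ?_
    have hq := hp u hu
    simp only [Pi.pow_apply]
    generalize ρ * u ^ 2 + α * u + β = q at hq ⊢
    field_simp [hq]
    ring
  intro u hu
  have hmem : Set.Ioo c d ∈ nhds u := Ioo_mem_nhds hu.1 hu.2
  have hd1 : ∀ v ∈ Set.Ioo c d,
      deriv (fun u => (ρ * u ^ 2 + α * u + β) * S u) v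
        = (2 * ρ * v + α) * S v + ω * C v := fun v hv => (ha' v hv).deriv
  have hd2 : ∀ v ∈ Set.Ioo c d,
      deriv (deriv (fun u => (ρ * u ^ 2 + α * u + β) * S u)) v
        = (2 * ρ + ω ^ 2 * (ρ * v ^ 2 + α * v + β)⁻¹) * S v
          + ω * (2 * ρ * v + α) * (ρ * v ^ 2 + α * v + β)⁻¹ * C v := by
    intro v hv
    have hev : deriv (fun u => (ρ * u ^ 2 + α * u + β) * S u)
        =ᶠ[nhds v] fun w => (2 * ρ * w + α) * S w + ω * C w :=
      Filter.eventuallyEq_of_mem (Ioo_mem_nhds hv.1 hv.2) (fun w hw => hd1 w hw)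
    rw [hev.deriv_eq, (hf1' v hv).deriv]
  have hd3 : deriv (deriv (deriv (fun u => (ρ * u ^ 2 + α * u + β) * S u))) u
      = ω * (4 * ρ * (ρ * u ^ 2 + α * u + β)⁻¹
          + (ω ^ 2 - (2 * ρ * u + α) ^ 2) * ((ρ * u ^ 2 + α * u + β) ^ 2)⁻¹) * C u := by
    have hev : deriv (deriv (fun u => (ρ * u ^ 2 + α * u + β) * S u))
        =ᶠ[nhds u] fun w => (2 * ρ + ω ^ 2 * (ρ * w ^ 2 + α * w + β)⁻¹) * S w
          + ω * (2 * ρ * w + α) * (ρ * w ^ 2 + α * w + β)⁻¹ * C w :=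
      Filter.eventuallyEq_of_mem hmem (fun w hw => hd2 w hw)
    rw [hev.deriv_eq, (hf2' u hu).deriv]
  have hu' := hp u hu
  rw [odeLHS, hd3, hd1 u hu, (hτ' u hu).deriv]
  have hk : k = (α ^ 2 - 4 * ρ * β - ω ^ 2) / 8 := by linarith
  rw [hk]
  field_simp
  ring

/-- with 4ρβ − α² + 8k = −ω², p(u) = ρu²+αu+β, τ = k·p⁻², and Φ' = p⁻¹ on an
open interval where p ≠ 0, both a = p·sinh(ωΦ) and a = p·cosh(ωΦ) solve a''' + 8τa' + 4τ'a = 0. -/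
theorem ode_solutions_hyperbolic (ρ α β k ω : ℝ)
    (hω : 4 * ρ * β - α ^ 2 + 8 * k = -ω ^ 2)
    (c d : ℝ) (hp : ∀ u ∈ Set.Ioo c d, ρ * u ^ 2 + α * u + β ≠ 0)
    (Φ : ℝ → ℝ)
    (hΦ : ∀ u ∈ Set.Ioo c d, HasDerivAt Φ ((ρ * u ^ 2 + α * u + β)⁻¹) u) :
    ∀ u ∈ Set.Ioo c d,
      odeLHS (fun u => k * ((ρ * u ^ 2 + α * u + β) ^ 2)⁻¹)
        (fun u => (ρ * u ^ 2 + α * u + β) * Real.sinh (ω * Φ u)) u = 0 ∧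
      odeLHS (fun u => k * ((ρ * u ^ 2 + α * u + β) ^ 2)⁻¹)
        (fun u => (ρ * u ^ 2 + α * u + β) * Real.cosh (ω * Φ u)) u = 0 := by
  have hS : ∀ u ∈ Set.Ioo c d, HasDerivAt (fun u => Real.sinh (ω * Φ u))
      (ω * (ρ * u ^ 2 + α * u + β)⁻¹ * Real.cosh (ω * Φ u)) u := by
    intro u hu
    have h := (Real.hasDerivAt_sinh (ω * Φ u)).comp u ((hΦ u hu).const_mul ω)
    refine h.congr_deriv ?_
    ring
  have hC : ∀ u ∈ Set.Ioo c d, HasDerivAt (fun u => Real.cosh (ω * Φ u))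
      (ω * (ρ * u ^ 2 + α * u + β)⁻¹ * Real.sinh (ω * Φ u)) u := by
    intro u hu
    have h := (Real.hasDerivAt_cosh (ω * Φ u)).comp u ((hΦ u hu).const_mul ω)
    refine h.congr_deriv ?_
    ring
  intro u hu
  exact ⟨key_ode ρ α β k ω c d hω hp _ _ hS hC u hu,
         key_ode ρ α β k ω c d hω hp _ _ hC hS u hu⟩
end

section
/- Let n, q ∈ ℝ with n ≠ 1, set ω = −q²(1−n)²/8 and τ(u) = −(1/8)·n(n−2)·u⁻² + ω·u^{−2n} for u > 0. Then each of the three functions a(u) = u^n, a(u) = u^n·sinh(q·u^{1−n}), and a(u) = u^n·cosh(q·u^{1−n}) satisfies a'''(u) + 8τ(u)·a'(u) + 4τ'(u)·a(u) = 0 for all u > 0. -/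
/- Auxiliary derivative lemmas -/

private lemma hd_rpow (e : ℝ) {u : ℝ} (hu : 0 < u) :
    HasDerivAt (fun v : ℝ => v ^ e) (e * u ^ (e - 1)) u :=
  Real.hasDerivAt_rpow_const (Or.inl hu.ne')

private lemma hd_inner (n q : ℝ) {u : ℝ} (hu : 0 < u) :
    HasDerivAt (fun v : ℝ => q * v ^ (1 - n)) (q * ((1 - n) * u ^ (1 - n - 1))) u :=
  (hd_rpow (1 - n) hu).const_mul q

private lemma hd_pow_sinh (n q e : ℝ) {u : ℝ} (hu : 0 < u) :
    HasDerivAt (fun v : ℝ => v ^ e * Real.sinh (q * v ^ (1 - n)))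
      (e * u ^ (e - 1) * Real.sinh (q * u ^ (1 - n))
        + q * (1 - n) * u ^ (e - n) * Real.cosh (q * u ^ (1 - n))) u := by
  have h := (hd_rpow e hu).mul (hd_inner n q hu).sinh
  have key : e * u ^ (e - 1) * Real.sinh (q * u ^ (1 - n))
        + q * (1 - n) * u ^ (e - n) * Real.cosh (q * u ^ (1 - n))
      = e * u ^ (e - 1) * Real.sinh (q * u ^ (1 - n))
        + u ^ e * (Real.cosh (q * u ^ (1 - n)) * (q * ((1 - n) * u ^ (1 - n - 1)))) := by
    rw [show (1 - n - 1 : ℝ) = -n by ring,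
      show u ^ (e - n) = u ^ e * u ^ (-n : ℝ) by rw [sub_eq_add_neg, Real.rpow_add hu]]
    ring
  rw [key]; exact h

private lemma hd_pow_cosh (n q e : ℝ) {u : ℝ} (hu : 0 < u) :
    HasDerivAt (fun v : ℝ => v ^ e * Real.cosh (q * v ^ (1 - n)))
      (e * u ^ (e - 1) * Real.cosh (q * u ^ (1 - n))
        + q * (1 - n) * u ^ (e - n) * Real.sinh (q * u ^ (1 - n))) u := by
  have h := (hd_rpow e hu).mul (hd_inner n q hu).cosh
  have key : e * u ^ (e - 1) * Real.cosh (q * u ^ (1 - n))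
        + q * (1 - n) * u ^ (e - n) * Real.sinh (q * u ^ (1 - n))
      = e * u ^ (e - 1) * Real.cosh (q * u ^ (1 - n))
        + u ^ e * (Real.sinh (q * u ^ (1 - n)) * (q * ((1 - n) * u ^ (1 - n - 1)))) := by
    rw [show (1 - n - 1 : ℝ) = -n by ring,
      show u ^ (e - n) = u ^ e * u ^ (-n : ℝ) by rw [sub_eq_add_neg, Real.rpow_add hu]]
    ring
  rw [key]; exact h

private lemma hd_tau (n q : ℝ) {u : ℝ} (hu : 0 < u) :
    HasDerivAt (fun v : ℝ => -(1 / 8) * (n * (n - 2)) / v ^ 2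
        + (-(q ^ 2 * (1 - n) ^ 2 / 8)) * v ^ (-(2 * n)))
      ((0 * u ^ 2 - -(1 / 8) * (n * (n - 2)) * ((2 : ℕ) * u ^ 1)) / (u ^ 2) ^ 2
        + (-(q ^ 2 * (1 - n) ^ 2 / 8)) * (-(2 * n) * u ^ (-(2 * n) - 1))) u := by
  exact ((hasDerivAt_const u (-(1 / 8) * (n * (n - 2)))).div (hasDerivAt_pow 2 u)
      (pow_ne_zero 2 hu.ne')).add
    ((hd_rpow (-(2 * n)) hu).const_mul (-(q ^ 2 * (1 - n) ^ 2 / 8)))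

set_option maxHeartbeats 1000000 in
/-- with τ(u) = −n(n−2)u⁻²/8 + ω·u^{−2n}, ω = −q²(1−n)²/8, the functions
u^n, u^n·sinh(qu^{1−n}), u^n·cosh(qu^{1−n}) solve a''' + 8τa' + 4τ'a = 0 for u > 0. -/
theorem ode_solutions_power_hyperbolic (n q : ℝ) (hn : n ≠ 1) :
    ∀ u : ℝ, 0 < u →
      (odeLHS (fun u => -(1 / 8) * (n * (n - 2)) / u ^ 2
          + (-(q ^ 2 * (1 - n) ^ 2 / 8)) * u ^ (-(2 * n)))
        (fun u => u ^ n) u = 0 ∧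
       odeLHS (fun u => -(1 / 8) * (n * (n - 2)) / u ^ 2
          + (-(q ^ 2 * (1 - n) ^ 2 / 8)) * u ^ (-(2 * n)))
        (fun u => u ^ n * Real.sinh (q * u ^ (1 - n))) u = 0 ∧
       odeLHS (fun u => -(1 / 8) * (n * (n - 2)) / u ^ 2
          + (-(q ^ 2 * (1 - n) ^ 2 / 8)) * u ^ (-(2 * n)))
        (fun u => u ^ n * Real.cosh (q * u ^ (1 - n))) u = 0) := by
  intro u hu
  have hu' : u ≠ 0 := hu.ne'
  have hpos : ∀ᶠ v in nhds u, 0 < v := eventually_gt_nhds hu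
  have hPn : (u : ℝ) ^ n ≠ 0 := (Real.rpow_pos_of_pos hu n).ne'
  -- exponent normalizations
  have r0 : u ^ (n - 1) = u ^ n / u := by
    rw [Real.rpow_sub hu, Real.rpow_one]
  have r1 : u ^ (n - 2 - 1) = u ^ n / u / u / u := by
    rw [show (n - 2 - 1 : ℝ) = n - 1 - 1 - 1 by ring, Real.rpow_sub hu, Real.rpow_sub hu,
      Real.rpow_sub hu, Real.rpow_one]
  have r5 : u ^ (-1 - 1 : ℝ) = u⁻¹ / u := by
    rw [Real.rpow_sub hu, Real.rpow_neg_one, Real.rpow_one]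
  have r2 : u ^ (n - 2 - n) = u⁻¹ / u := by
    rw [show (n - 2 - n : ℝ) = -1 - 1 by ring]; exact r5
  have r3 : u ^ (-n - 1) = (u ^ n)⁻¹ / u := by
    rw [Real.rpow_sub hu, Real.rpow_one, Real.rpow_neg hu.le]
  have r4 : u ^ (-n - n) = (u ^ n)⁻¹ / u ^ n := by
    rw [Real.rpow_sub hu, Real.rpow_neg hu.le]
  have r6 : u ^ (-1 - n : ℝ) = u⁻¹ / u ^ n := by
    rw [Real.rpow_sub hu, Real.rpow_neg_one]
  have r7 : u ^ (-(2 * n)) = (u ^ n)⁻¹ / u ^ n := by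
    rw [show (-(2 * n) : ℝ) = -n - n by ring]; exact r4
  have r8 : u ^ (-(2 * n) - 1) = (u ^ n)⁻¹ / u ^ n / u := by
    rw [Real.rpow_sub hu, Real.rpow_one, r7]
  have hτ := hd_tau n q hu
  refine ⟨?_, ?_, ?_⟩
  · -- pure power
    have h0 : ∀ v : ℝ, 0 < v → HasDerivAt (fun w : ℝ => w ^ n)
        ((fun w : ℝ => n * w ^ (n - 1)) v) v := fun v hv => hd_rpow n hv
    have h1 : ∀ v : ℝ, 0 < v → HasDerivAt (fun w : ℝ => n * w ^ (n - 1))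
        ((fun w : ℝ => n * ((n - 1) * w ^ (n - 1 - 1))) v) v := fun v hv =>
      (hd_rpow (n - 1) hv).const_mul n
    have h2 : HasDerivAt (fun w : ℝ => n * ((n - 1) * w ^ (n - 1 - 1)))
        (n * ((n - 1) * ((n - 1 - 1) * u ^ (n - 1 - 1 - 1)))) u :=
      ((hd_rpow (n - 1 - 1) hu).const_mul (n - 1)).const_mul n
    have e1 : deriv (fun w : ℝ => w ^ n) =ᶠ[nhds u] fun w : ℝ => n * w ^ (n - 1) := by
      filter_upwards [hpos] with v hv using (h0 v hv).deriv
    have e2 : deriv (fun w : ℝ => n * w ^ (n - 1)) =ᶠ[nhds u]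
        fun w : ℝ => n * ((n - 1) * w ^ (n - 1 - 1)) := by
      filter_upwards [hpos] with v hv using (h1 v hv).deriv
    have e12 := e1.deriv.trans e2
    have hd3 : deriv (deriv (deriv (fun w : ℝ => w ^ n))) u
        = n * ((n - 1) * ((n - 1 - 1) * u ^ (n - 1 - 1 - 1))) := by
      rw [e12.deriv_eq, h2.deriv]
    have rA : u ^ (n - 1 - 1 - 1) = u ^ n / u / u / u := by
      rw [Real.rpow_sub hu, Real.rpow_sub hu, Real.rpow_sub hu, Real.rpow_one]
    rw [odeLHS, hd3, (h0 u hu).deriv, hτ.deriv]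
    beta_reduce
    rw [rA, r0, r7, r8]
    push_cast
    field_simp
    ring
  · -- sinh solution
    have h0 : ∀ v : ℝ, 0 < v →
        HasDerivAt (fun w : ℝ => w ^ n * Real.sinh (q * w ^ (1 - n)))
          ((fun w : ℝ => n * (w ^ (n - 1) * Real.sinh (q * w ^ (1 - n)))
            + q * (1 - n) * Real.cosh (q * w ^ (1 - n))) v) v := by
      intro v hv
      have h := hd_pow_sinh n q n hv
      have key : n * (v ^ (n - 1) * Real.sinh (q * v ^ (1 - n)))
            + q * (1 - n) * Real.cosh (q * v ^ (1 - n))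
          = n * v ^ (n - 1) * Real.sinh (q * v ^ (1 - n))
            + q * (1 - n) * v ^ (n - n) * Real.cosh (q * v ^ (1 - n)) := by
        rw [sub_self, Real.rpow_zero]; ring
      simpa only [key] using h
    have h1 : ∀ v : ℝ, 0 < v →
        HasDerivAt (fun w : ℝ => n * (w ^ (n - 1) * Real.sinh (q * w ^ (1 - n)))
            + q * (1 - n) * Real.cosh (q * w ^ (1 - n)))
          ((fun w : ℝ => n * (n - 1) * (w ^ (n - 2) * Real.sinh (q * w ^ (1 - n)))
            + q ^ 2 * (1 - n) ^ 2 * (w ^ (-n : ℝ) * Real.sinh (q * w ^ (1 - n)))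
            + n * (q * (1 - n)) * (w ^ (-1 : ℝ) * Real.cosh (q * w ^ (1 - n)))) v) v := by
      intro v hv
      have h := ((hd_pow_sinh n q (n - 1) hv).const_mul n).add
        ((hd_inner n q hv).cosh.const_mul (q * (1 - n)))
      have key : n * (n - 1) * (v ^ (n - 2) * Real.sinh (q * v ^ (1 - n)))
            + q ^ 2 * (1 - n) ^ 2 * (v ^ (-n : ℝ) * Real.sinh (q * v ^ (1 - n)))
            + n * (q * (1 - n)) * (v ^ (-1 : ℝ) * Real.cosh (q * v ^ (1 - n)))
          = n * ((n - 1) * v ^ (n - 1 - 1) * Real.sinh (q * v ^ (1 - n))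
              + q * (1 - n) * v ^ (n - 1 - n) * Real.cosh (q * v ^ (1 - n)))
            + q * (1 - n) * (Real.sinh (q * v ^ (1 - n)) * (q * ((1 - n) * v ^ (1 - n - 1)))) := by
        rw [show (n - 1 - 1 : ℝ) = n - 2 by ring, show (n - 1 - n : ℝ) = -1 by ring,
          show (1 - n - 1 : ℝ) = -n by ring]
        ring
      simpa only [key, Pi.add_def] using h
    have h2 : HasDerivAt (fun w : ℝ => n * (n - 1) * (w ^ (n - 2) * Real.sinh (q * w ^ (1 - n)))
            + q ^ 2 * (1 - n) ^ 2 * (w ^ (-n : ℝ) * Real.sinh (q * w ^ (1 - n)))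
            + n * (q * (1 - n)) * (w ^ (-1 : ℝ) * Real.cosh (q * w ^ (1 - n))))
        (n * (n - 1) * ((n - 2) * u ^ (n - 2 - 1) * Real.sinh (q * u ^ (1 - n))
            + q * (1 - n) * u ^ (n - 2 - n) * Real.cosh (q * u ^ (1 - n)))
          + q ^ 2 * (1 - n) ^ 2 * (-n * u ^ (-n - 1) * Real.sinh (q * u ^ (1 - n))
            + q * (1 - n) * u ^ (-n - n) * Real.cosh (q * u ^ (1 - n)))
          + n * (q * (1 - n)) * (-1 * u ^ (-1 - 1 : ℝ) * Real.cosh (q * u ^ (1 - n))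
            + q * (1 - n) * u ^ (-1 - n : ℝ) * Real.sinh (q * u ^ (1 - n)))) u :=
      (((hd_pow_sinh n q (n - 2) hu).const_mul (n * (n - 1))).add
        ((hd_pow_sinh n q (-n) hu).const_mul (q ^ 2 * (1 - n) ^ 2))).add
        ((hd_pow_cosh n q (-1) hu).const_mul (n * (q * (1 - n))))
    have e1 : deriv (fun w : ℝ => w ^ n * Real.sinh (q * w ^ (1 - n))) =ᶠ[nhds u]
        fun w : ℝ => n * (w ^ (n - 1) * Real.sinh (q * w ^ (1 - n)))
          + q * (1 - n) * Real.cosh (q * w ^ (1 - n)) := by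
      filter_upwards [hpos] with v hv using (h0 v hv).deriv
    have e2 : deriv (fun w : ℝ => n * (w ^ (n - 1) * Real.sinh (q * w ^ (1 - n)))
          + q * (1 - n) * Real.cosh (q * w ^ (1 - n))) =ᶠ[nhds u]
        fun w : ℝ => n * (n - 1) * (w ^ (n - 2) * Real.sinh (q * w ^ (1 - n)))
          + q ^ 2 * (1 - n) ^ 2 * (w ^ (-n : ℝ) * Real.sinh (q * w ^ (1 - n)))
          + n * (q * (1 - n)) * (w ^ (-1 : ℝ) * Real.cosh (q * w ^ (1 - n))) := by
      filter_upwards [hpos] with v hv using (h1 v hv).deriv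
    have e12 := e1.deriv.trans e2
    rw [odeLHS, e12.deriv_eq, h2.deriv, (h0 u hu).deriv, hτ.deriv]
    beta_reduce
    rw [r0, r1, r2, r3, r4, r5, r6, r7, r8]
    generalize Real.cosh (q * u ^ (1 - n)) = C
    generalize Real.sinh (q * u ^ (1 - n)) = S
    push_cast
    field_simp
    ring
  · -- cosh solution
    have h0 : ∀ v : ℝ, 0 < v →
        HasDerivAt (fun w : ℝ => w ^ n * Real.cosh (q * w ^ (1 - n)))
          ((fun w : ℝ => n * (w ^ (n - 1) * Real.cosh (q * w ^ (1 - n)))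
            + q * (1 - n) * Real.sinh (q * w ^ (1 - n))) v) v := by
      intro v hv
      have h := hd_pow_cosh n q n hv
      have key : n * (v ^ (n - 1) * Real.cosh (q * v ^ (1 - n)))
            + q * (1 - n) * Real.sinh (q * v ^ (1 - n))
          = n * v ^ (n - 1) * Real.cosh (q * v ^ (1 - n))
            + q * (1 - n) * v ^ (n - n) * Real.sinh (q * v ^ (1 - n)) := by
        rw [sub_self, Real.rpow_zero]; ring
      simpa only [key] using h
    have h1 : ∀ v : ℝ, 0 < v →
        HasDerivAt (fun w : ℝ => n * (w ^ (n - 1) * Real.cosh (q * w ^ (1 - n)))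
            + q * (1 - n) * Real.sinh (q * w ^ (1 - n)))
          ((fun w : ℝ => n * (n - 1) * (w ^ (n - 2) * Real.cosh (q * w ^ (1 - n)))
            + q ^ 2 * (1 - n) ^ 2 * (w ^ (-n : ℝ) * Real.cosh (q * w ^ (1 - n)))
            + n * (q * (1 - n)) * (w ^ (-1 : ℝ) * Real.sinh (q * w ^ (1 - n)))) v) v := by
      intro v hv
      have h := ((hd_pow_cosh n q (n - 1) hv).const_mul n).add
        ((hd_inner n q hv).sinh.const_mul (q * (1 - n)))
      have key : n * (n - 1) * (v ^ (n - 2) * Real.cosh (q * v ^ (1 - n)))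
            + q ^ 2 * (1 - n) ^ 2 * (v ^ (-n : ℝ) * Real.cosh (q * v ^ (1 - n)))
            + n * (q * (1 - n)) * (v ^ (-1 : ℝ) * Real.sinh (q * v ^ (1 - n)))
          = n * ((n - 1) * v ^ (n - 1 - 1) * Real.cosh (q * v ^ (1 - n))
              + q * (1 - n) * v ^ (n - 1 - n) * Real.sinh (q * v ^ (1 - n)))
            + q * (1 - n) * (Real.cosh (q * v ^ (1 - n)) * (q * ((1 - n) * v ^ (1 - n - 1)))) := by
        rw [show (n - 1 - 1 : ℝ) = n - 2 by ring, show (n - 1 - n : ℝ) = -1 by ring,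
          show (1 - n - 1 : ℝ) = -n by ring]
        ring
      simpa only [key, Pi.add_def] using h
    have h2 : HasDerivAt (fun w : ℝ => n * (n - 1) * (w ^ (n - 2) * Real.cosh (q * w ^ (1 - n)))
            + q ^ 2 * (1 - n) ^ 2 * (w ^ (-n : ℝ) * Real.cosh (q * w ^ (1 - n)))
            + n * (q * (1 - n)) * (w ^ (-1 : ℝ) * Real.sinh (q * w ^ (1 - n))))
        (n * (n - 1) * ((n - 2) * u ^ (n - 2 - 1) * Real.cosh (q * u ^ (1 - n))
            + q * (1 - n) * u ^ (n - 2 - n) * Real.sinh (q * u ^ (1 - n)))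
          + q ^ 2 * (1 - n) ^ 2 * (-n * u ^ (-n - 1) * Real.cosh (q * u ^ (1 - n))
            + q * (1 - n) * u ^ (-n - n) * Real.sinh (q * u ^ (1 - n)))
          + n * (q * (1 - n)) * (-1 * u ^ (-1 - 1 : ℝ) * Real.sinh (q * u ^ (1 - n))
            + q * (1 - n) * u ^ (-1 - n : ℝ) * Real.cosh (q * u ^ (1 - n)))) u :=
      (((hd_pow_cosh n q (n - 2) hu).const_mul (n * (n - 1))).add
        ((hd_pow_cosh n q (-n) hu).const_mul (q ^ 2 * (1 - n) ^ 2))).add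
        ((hd_pow_sinh n q (-1) hu).const_mul (n * (q * (1 - n))))
    have e1 : deriv (fun w : ℝ => w ^ n * Real.cosh (q * w ^ (1 - n))) =ᶠ[nhds u]
        fun w : ℝ => n * (w ^ (n - 1) * Real.cosh (q * w ^ (1 - n)))
          + q * (1 - n) * Real.sinh (q * w ^ (1 - n)) := by
      filter_upwards [hpos] with v hv using (h0 v hv).deriv
    have e2 : deriv (fun w : ℝ => n * (w ^ (n - 1) * Real.cosh (q * w ^ (1 - n)))
          + q * (1 - n) * Real.sinh (q * w ^ (1 - n))) =ᶠ[nhds u]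
        fun w : ℝ => n * (n - 1) * (w ^ (n - 2) * Real.cosh (q * w ^ (1 - n)))
          + q ^ 2 * (1 - n) ^ 2 * (w ^ (-n : ℝ) * Real.cosh (q * w ^ (1 - n)))
          + n * (q * (1 - n)) * (w ^ (-1 : ℝ) * Real.sinh (q * w ^ (1 - n))) := by
      filter_upwards [hpos] with v hv using (h1 v hv).deriv
    have e12 := e1.deriv.trans e2
    rw [odeLHS, e12.deriv_eq, h2.deriv, (h0 u hu).deriv, hτ.deriv]
    beta_reduce
    rw [r0, r1, r2, r3, r4, r5, r6, r7, r8]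
    generalize Real.cosh (q * u ^ (1 - n)) = C
    generalize Real.sinh (q * u ^ (1 - n)) = S
    push_cast
    field_simp
    ring
end

section
/- Let l, β, ζ, σ ∈ ℝ, set ω = (1−l²)/8 and τ(u) = ω·u⁻² for u > 0. Then the function a(u) = u·(β + ζ·u^l + σ·u^{−l}) satisfies a'''(u) + 8τ(u)·a'(u) + 4τ'(u)·a(u) = 0 for all u > 0. -/
private lemma hd1 (l β ζ σ : ℝ) {u : ℝ} (hu : 0 < u) :
    HasDerivAt (fun u : ℝ => u * (β + ζ * u ^ l + σ * u ^ (-l)))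
      (β + ζ * (1 + l) * u ^ l + σ * (1 - l) * u ^ (-l)) u := by
  have h1 : HasDerivAt (fun x : ℝ => x ^ l) (l * u ^ (l - 1)) u :=
    Real.hasDerivAt_rpow_const (Or.inl hu.ne')
  have h2 : HasDerivAt (fun x : ℝ => x ^ (-l)) (-l * u ^ (-l - 1)) u :=
    Real.hasDerivAt_rpow_const (Or.inl hu.ne')
  have h := (hasDerivAt_id u).mul (((h1.const_mul ζ).const_add β).add (h2.const_mul σ))
  refine h.congr_deriv ?_
  have e1 : u ^ (l - 1) = u ^ l / u := by rw [Real.rpow_sub hu, Real.rpow_one]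
  have e2 : u ^ (-l - 1) = u ^ (-l) / u := by rw [Real.rpow_sub hu, Real.rpow_one]
  simp only [Pi.add_apply, id]
  rw [e1, e2]
  field_simp
  ring

private lemma hd2 (l β ζ σ : ℝ) {u : ℝ} (hu : 0 < u) :
    HasDerivAt (fun u : ℝ => β + ζ * (1 + l) * u ^ l + σ * (1 - l) * u ^ (-l))
      (ζ * (1 + l) * (l * u ^ (l - 1)) + σ * (1 - l) * (-l * u ^ (-l - 1))) u := by
  have h1 : HasDerivAt (fun x : ℝ => x ^ l) (l * u ^ (l - 1)) u :=
    Real.hasDerivAt_rpow_const (Or.inl hu.ne')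
  have h2 : HasDerivAt (fun x : ℝ => x ^ (-l)) (-l * u ^ (-l - 1)) u :=
    Real.hasDerivAt_rpow_const (Or.inl hu.ne')
  exact ((h1.const_mul (ζ * (1 + l))).const_add β).add (h2.const_mul (σ * (1 - l)))

private lemma hd3 (l ζ σ : ℝ) {u : ℝ} (hu : 0 < u) :
    HasDerivAt (fun u : ℝ => ζ * (1 + l) * (l * u ^ (l - 1)) + σ * (1 - l) * (-l * u ^ (-l - 1)))
      (ζ * (1 + l) * (l * ((l - 1) * u ^ (l - 1 - 1)))
        + σ * (1 - l) * (-l * ((-l - 1) * u ^ (-l - 1 - 1)))) u := by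
  have h1 : HasDerivAt (fun x : ℝ => x ^ (l - 1)) ((l - 1) * u ^ (l - 1 - 1)) u :=
    Real.hasDerivAt_rpow_const (Or.inl hu.ne')
  have h2 : HasDerivAt (fun x : ℝ => x ^ (-l - 1)) ((-l - 1) * u ^ (-l - 1 - 1)) u :=
    Real.hasDerivAt_rpow_const (Or.inl hu.ne')
  have := ((h1.const_mul l).const_mul (ζ * (1 + l))).add
    (((h2.const_mul (-l)).const_mul (σ * (1 - l))))
  exact this

/-- with τ(u) = ((1−l²)/8)·u⁻², the function a(u) = u(β + ζu^l + σu^{−l})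
solves a''' + 8τa' + 4τ'a = 0 for u > 0. -/
theorem ode_solution_case_a (l β ζ σ : ℝ) :
    ∀ u : ℝ, 0 < u →
      odeLHS (fun u => ((1 - l ^ 2) / 8) / u ^ 2)
        (fun u => u * (β + ζ * u ^ l + σ * u ^ (-l))) u = 0 := by
  intro u hu
  set a : ℝ → ℝ := fun u => u * (β + ζ * u ^ l + σ * u ^ (-l)) with ha
  have hda : ∀ᶠ x in nhds u, deriv a x
      = β + ζ * (1 + l) * x ^ l + σ * (1 - l) * x ^ (-l) := by
    filter_upwards [eventually_gt_nhds hu] with x hx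
    exact (hd1 l β ζ σ hx).deriv
  have hdda : ∀ᶠ x in nhds u, deriv (deriv a) x
      = ζ * (1 + l) * (l * x ^ (l - 1)) + σ * (1 - l) * (-l * x ^ (-l - 1)) := by
    filter_upwards [eventually_gt_nhds hu] with x hx
    have hev : deriv a =ᶠ[nhds x]
        fun y => β + ζ * (1 + l) * y ^ l + σ * (1 - l) * y ^ (-l) := by
      filter_upwards [eventually_gt_nhds hx] with y hy
      exact (hd1 l β ζ σ hy).deriv
    rw [hev.deriv_eq]
    exact (hd2 l β ζ σ hx).deriv
  have hddda : deriv (deriv (deriv a)) u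
      = ζ * (1 + l) * (l * ((l - 1) * u ^ (l - 1 - 1)))
        + σ * (1 - l) * (-l * ((-l - 1) * u ^ (-l - 1 - 1))) := by
    rw [Filter.EventuallyEq.deriv_eq hdda]
    exact (hd3 l ζ σ hu).deriv
  have hτ : deriv (fun u : ℝ => ((1 - l ^ 2) / 8) / u ^ 2) u
      = -((1 - l ^ 2) / 8) * (2 * u) / (u ^ 2) ^ 2 := by
    have h2 : HasDerivAt (fun x : ℝ => x ^ 2) (2 * u ^ 1) u := hasDerivAt_pow 2 u
    have := (hasDerivAt_const u ((1 - l ^ 2) / 8)).div h2 (pow_ne_zero 2 hu.ne')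
    have h := this.deriv
    simp only [zero_mul, zero_sub, pow_one] at h ⊢
    rw [show (fun u : ℝ => ((1 - l ^ 2) / 8) / u ^ 2) = ((fun x => (1 - l ^ 2) / 8) / fun x => x ^ 2) from rfl, h]; ring
  have hu0 : u ≠ 0 := hu.ne'
  rw [odeLHS, hddda, hda.self_of_nhds, hτ, ha]
  have e1 : u ^ (l - 1 - 1) = u ^ l / u / u := by
    rw [Real.rpow_sub hu, Real.rpow_sub hu, Real.rpow_one]
  have e2 : u ^ (-l - 1 - 1) = u ^ (-l) / u / u := by
    rw [Real.rpow_sub hu, Real.rpow_sub hu, Real.rpow_one]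
  rw [e1, e2]
  field_simp
  ring
end

section
/- Let β, ζ, σ ∈ ℝ and set τ(u) = (1/8)·u⁻² for u > 0. Then the function a(u) = u·(β + ζ·ln u + σ·(ln u)²) satisfies a'''(u) + 8τ(u)·a'(u) + 4τ'(u)·a(u) = 0 for all u > 0. -/
section aux

variable (β ζ σ : ℝ)

noncomputable def aFun : ℝ → ℝ := fun u => u * (β + ζ * Real.log u + σ * (Real.log u) ^ 2)
noncomputable def a1Fun : ℝ → ℝ := fun u =>
  β + ζ + ζ * Real.log u + 2 * σ * Real.log u + σ * (Real.log u) ^ 2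
noncomputable def a2Fun (β ζ σ : ℝ) : ℝ → ℝ := fun u => (ζ + 2 * σ + 2 * σ * Real.log u) / u
noncomputable def a3Fun (β ζ σ : ℝ) : ℝ → ℝ := fun u => (-ζ - 2 * σ * Real.log u) / u ^ 2

lemma hasDerivAt_aFun {u : ℝ} (hu : 0 < u) : HasDerivAt (aFun β ζ σ) (a1Fun β ζ σ u) u := by
  have hlog := Real.hasDerivAt_log hu.ne'
  have hin : HasDerivAt (fun u => β + ζ * Real.log u + σ * (Real.log u) ^ 2)
      (ζ * u⁻¹ + σ * ((2 : ℕ) * Real.log u ^ 1 * u⁻¹)) u :=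
    ((hlog.const_mul ζ).const_add β).add ((hlog.pow 2).const_mul σ)
  have h := (hasDerivAt_id u).mul hin
  refine h.congr_deriv ?_
  unfold a1Fun id
  field_simp
  ring

lemma hasDerivAt_a1Fun {u : ℝ} (hu : 0 < u) : HasDerivAt (a1Fun β ζ σ) (a2Fun β ζ σ u) u := by
  have hlog := Real.hasDerivAt_log hu.ne'
  have h : HasDerivAt (a1Fun β ζ σ)
      (ζ * u⁻¹ + 2 * σ * u⁻¹ + σ * ((2 : ℕ) * Real.log u ^ 1 * u⁻¹)) u :=
    ((((hlog.const_mul ζ).const_add (β + ζ)).add (hlog.const_mul (2 * σ))).add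
      ((hlog.pow 2).const_mul σ))
  convert h using 1
  unfold a2Fun
  field_simp
  ring

lemma hasDerivAt_a2Fun {u : ℝ} (hu : 0 < u) : HasDerivAt (a2Fun β ζ σ) (a3Fun β ζ σ u) u := by
  have hlog := Real.hasDerivAt_log hu.ne'
  have hnum : HasDerivAt (fun u => ζ + 2 * σ + 2 * σ * Real.log u) (2 * σ * u⁻¹) u :=
    (hlog.const_mul (2 * σ)).const_add (ζ + 2 * σ)
  have h := hnum.div (hasDerivAt_id u) hu.ne'
  refine h.congr_deriv ?_
  unfold a3Fun id
  field_simp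
  ring

lemma hasDerivAt_tau {u : ℝ} (hu : 0 < u) :
    HasDerivAt (fun u : ℝ => (1 / 8) / u ^ 2) (-(1 / 4) / u ^ 3) u := by
  have h := (hasDerivAt_const u ((1 : ℝ) / 8)).div (hasDerivAt_pow 2 u)
    (pow_ne_zero 2 hu.ne')
  refine h.congr_deriv ?_
  field_simp
  ring

end aux

/-- with τ(u) = (1/8)·u⁻², the function a(u) = u(β + ζ·ln u + σ·(ln u)²)
solves a''' + 8τa' + 4τ'a = 0 for u > 0. -/
theorem ode_solution_case_b (β ζ σ : ℝ) :
    ∀ u : ℝ, 0 < u →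
      odeLHS (fun u => (1 / 8) / u ^ 2)
        (fun u => u * (β + ζ * Real.log u + σ * (Real.log u) ^ 2)) u = 0 := by
  intro u hu
  have hmem : Set.Ioi (0 : ℝ) ∈ nhds u := isOpen_Ioi.mem_nhds hu
  have E1 : deriv (aFun β ζ σ) =ᶠ[nhds u] a1Fun β ζ σ :=
    Filter.eventually_of_mem hmem fun x hx => (hasDerivAt_aFun β ζ σ hx).deriv
  have E2 : deriv (a1Fun β ζ σ) =ᶠ[nhds u] a2Fun β ζ σ :=
    Filter.eventually_of_mem hmem fun x hx => (hasDerivAt_a1Fun β ζ σ hx).deriv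
  have h3 : deriv (deriv (deriv (aFun β ζ σ))) u = a3Fun β ζ σ u := by
    have := (E1.deriv.trans E2).deriv.self_of_nhds
    rw [this, (hasDerivAt_a2Fun β ζ σ hu).deriv]
  have h1 : deriv (aFun β ζ σ) u = a1Fun β ζ σ u := (hasDerivAt_aFun β ζ σ hu).deriv
  have htau : deriv (fun u : ℝ => (1 / 8) / u ^ 2) u = -(1 / 4) / u ^ 3 :=
    (hasDerivAt_tau hu).deriv
  show deriv (deriv (deriv (aFun β ζ σ))) u + 8 * ((1 / 8) / u ^ 2) * deriv (aFun β ζ σ) u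
      + 4 * deriv (fun u : ℝ => (1 / 8) / u ^ 2) u * aFun β ζ σ u = 0
  rw [h3, h1, htau]
  unfold aFun a1Fun a3Fun
  field_simp
  ring
end

section
/- Let η, σ ∈ ℝ and define the vector fields on ℝ⁴: k = ∂_v, X₂ = ∂_u, X₃ = ∂_z + σ·(u∂_u − v∂_v), X₄ = ∂_y − η·(u∂_u − v∂_v), X₅ = u·(η∂_z + σ∂_y) + (σy + ηz)·∂_v. Then their Lie brackets satisfy: [k, X₄] = η·k, [k, X₃] = −σ·k, [k, X₂] = 0, [k, X₅] = 0, [X₄, X₂] = η·X₂, [X₃, X₂] = −σ·X₂, [X₂, X₅] = η·X₃ + σ·X₄, [X₄, X₃] = 0, [X₃, X₅] = η·k + σ·X₅, and [X₄, X₅] = σ·k − η·X₅. -/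
noncomputable def linCLM (M : Matrix (Fin 4) (Fin 4) ℝ) : (Fin 4 → ℝ) →L[ℝ] (Fin 4 → ℝ) :=
  LinearMap.toContinuousLinearMap (Matrix.mulVecLin M)

lemma fderiv_affine (b : Fin 4 → ℝ) (M : Matrix (Fin 4) (Fin 4) ℝ) (p : Fin 4 → ℝ) :
    fderiv ℝ (fun q => b + linCLM M q) p = linCLM M :=
  (((linCLM M).hasFDerivAt (x := p)).const_add b).fderiv

lemma linCLM_apply (M : Matrix (Fin 4) (Fin 4) ℝ) (q : Fin 4 → ℝ) (i : Fin 4) :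
    linCLM M q i = M i 0 * q 0 + M i 1 * q 1 + M i 2 * q 2 + M i 3 * q 3 := by
  simp [linCLM, Matrix.mulVec, dotProduct, Fin.sum_univ_four]

/-- Lie brackets of the Killing vectors k = ∂_v, X₂ = ∂_u,
X₃ = ∂_z + σ(u∂_u − v∂_v), X₄ = ∂_y − η(u∂_u − v∂_v), X₅ = u(η∂_z + σ∂_y) + (σy+ηz)∂_v. -/
theorem lie_brackets_class9
    (η σ : ℝ)
    (k X₂ X₃ X₄ X₅ : (Fin 4 → ℝ) → (Fin 4 → ℝ))
    (hk : k = fun _ => ![0, 1, 0, 0])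
    (hX₂ : X₂ = fun _ => ![1, 0, 0, 0])
    (hX₃ : X₃ = fun p => ![σ * p 0, -(σ * p 1), 0, 1])
    (hX₄ : X₄ = fun p => ![-(η * p 0), η * p 1, 1, 0])
    (hX₅ : X₅ = fun p => ![0, σ * p 2 + η * p 3, σ * p 0, η * p 0]) :
    lieBracket k X₄ = (fun p => η • k p) ∧
    lieBracket k X₃ = (fun p => -σ • k p) ∧
    lieBracket k X₂ = (fun _ => 0) ∧
    lieBracket k X₅ = (fun _ => 0) ∧
    lieBracket X₄ X₂ = (fun p => η • X₂ p) ∧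
    lieBracket X₃ X₂ = (fun p => -σ • X₂ p) ∧
    lieBracket X₂ X₅ = (fun p => η • X₃ p + σ • X₄ p) ∧
    lieBracket X₄ X₃ = (fun _ => 0) ∧
    lieBracket X₃ X₅ = (fun p => η • k p + σ • X₅ p) ∧
    lieBracket X₄ X₅ = (fun p => σ • k p - η • X₅ p) := by
  have hfk : ∀ p, fderiv ℝ k p = linCLM 0 := by
    intro p
    have h : k = fun q => ![(0:ℝ),1,0,0] + linCLM 0 q := by
      funext q; ext i; rw [hk]
      fin_cases i <;>
        simp [linCLM_apply, Matrix.vecHead, Matrix.vecTail]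
    rw [h]; exact fderiv_affine _ _ p
  have hf2 : ∀ p, fderiv ℝ X₂ p = linCLM 0 := by
    intro p
    have h : X₂ = fun q => ![(1:ℝ),0,0,0] + linCLM 0 q := by
      funext q; ext i; rw [hX₂]
      fin_cases i <;>
        simp [linCLM_apply, Matrix.vecHead, Matrix.vecTail]
    rw [h]; exact fderiv_affine _ _ p
  have hf3 : ∀ p, fderiv ℝ X₃ p =
      linCLM !![σ,0,0,0; 0,-σ,0,0; 0,0,0,0; 0,0,0,0] := by
    intro p
    have h : X₃ = fun q => ![(0:ℝ),0,0,1] + linCLM !![σ,0,0,0; 0,-σ,0,0; 0,0,0,0; 0,0,0,0] q := by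
      funext q; ext i; rw [hX₃]
      fin_cases i <;>
        simp [linCLM_apply, Matrix.vecHead, Matrix.vecTail] <;> ring
    rw [h]; exact fderiv_affine _ _ p
  have hf4 : ∀ p, fderiv ℝ X₄ p =
      linCLM !![-η,0,0,0; 0,η,0,0; 0,0,0,0; 0,0,0,0] := by
    intro p
    have h : X₄ = fun q => ![(0:ℝ),0,1,0] + linCLM !![-η,0,0,0; 0,η,0,0; 0,0,0,0; 0,0,0,0] q := by
      funext q; ext i; rw [hX₄]
      fin_cases i <;>
        simp [linCLM_apply, Matrix.vecHead, Matrix.vecTail] <;> ring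
    rw [h]; exact fderiv_affine _ _ p
  have hf5 : ∀ p, fderiv ℝ X₅ p =
      linCLM !![0,0,0,0; 0,0,σ,η; σ,0,0,0; η,0,0,0] := by
    intro p
    have h : X₅ = fun q => ![(0:ℝ),0,0,0] + linCLM !![0,0,0,0; 0,0,σ,η; σ,0,0,0; η,0,0,0] q := by
      funext q; ext i; rw [hX₅]
      fin_cases i <;>
        simp [linCLM_apply, Matrix.vecHead, Matrix.vecTail] <;> ring
    rw [h]; exact fderiv_affine _ _ p
  refine ⟨?_, ?_, ?_, ?_, ?_, ?_, ?_, ?_, ?_, ?_⟩ <;>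
  · funext p
    simp only [lieBracket, hfk, hf2, hf3, hf4, hf5]
    subst hk hX₂ hX₃ hX₄ hX₅
    ext i
    fin_cases i <;>
      simp [linCLM_apply, Matrix.vecHead, Matrix.vecTail] <;> ring
end

section
/- Let ζ ∈ ℝ and consider, on the open set {(u,v,y,z) ∈ ℝ⁴ : u ≠ 0 and y² + z² > 0}, the pp-wave metric g_H with H(u,y,z) = (ζ/2)·u⁻²·ln(y² + z²) (that is, H = ζ·u⁻²·ln|r| with r = √(y²+z²)). Then the vector field S = u²∂_u + (−ζ·ln|u| + (y²+z²)/2)·∂_v + u·(y∂_y + z∂_z) satisfies ℒ_S g_H = 2u·g_H, i.e. S is a proper special conformal Killing vector of g_H with conformal factor ψ = u. -/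
lemma pd_eq {f : (Fin 4 → ℝ) → ℝ} {L : (Fin 4 → ℝ) →L[ℝ] ℝ} {p : Fin 4 → ℝ}
    (h : HasFDerivAt f L p) (c : Fin 4) : pd f c p = L (Pi.single c 1) := by
  rw [pd, h.fderiv]

lemma hasFDerivAt_inv_comp {f : (Fin 4 → ℝ) → ℝ} {f' : (Fin 4 → ℝ) →L[ℝ] ℝ}
    {x : Fin 4 → ℝ} (h : HasFDerivAt f f' x) (hx : f x ≠ 0) :
    HasFDerivAt (fun y => (f y)⁻¹) (-((f x ^ 2)⁻¹ • f')) x := by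
  simpa [Function.comp_def] using (hasDerivAt_inv hx).comp_hasFDerivAt x h

set_option maxHeartbeats 1000000 in
/-- for H = ζ·u⁻²·ln|r| = (ζ/2)·u⁻²·ln(y²+z²), the vector field
S = u²∂_u + (−ζ·ln|u| + (y²+z²)/2)∂_v + u(y∂_y + z∂_z) is a proper special
conformal Killing vector of g_H with conformal factor ψ = u, on the region
u ≠ 0, y² + z² > 0. -/
theorem sckv_log_ppwave
    (ζ : ℝ)
    (H : (Fin 3 → ℝ) → ℝ)
    (hH : H = fun q => (ζ / 2) * ((q 0) ^ 2)⁻¹ * Real.log ((q 1) ^ 2 + (q 2) ^ 2))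
    (S : (Fin 4 → ℝ) → (Fin 4 → ℝ))
    (hS : S = fun p => ![(p 0) ^ 2,
        -ζ * Real.log |p 0| + ((p 2) ^ 2 + (p 3) ^ 2) / 2,
        p 0 * p 2, p 0 * p 3]) :
    ∀ p : Fin 4 → ℝ, p 0 ≠ 0 → 0 < (p 2) ^ 2 + (p 3) ^ 2 →
      ∀ i j, lieDeriv S (ppMetric H) p i j = 2 * p 0 * ppMetric H p i j := by
  subst hH hS
  intro p hu hr
  have hr' : p 2 * p 2 + p 3 * p 3 ≠ 0 := by rw [← pow_two, ← pow_two]; exact ne_of_gt hr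
  have hsq : p 0 * p 0 ≠ 0 := mul_ne_zero hu hu
  have hq : ∀ k : Fin 4, HasFDerivAt (fun q : Fin 4 → ℝ => q k)
      ((ContinuousLinearMap.proj k : ((_ : Fin 4) → ℝ) →L[ℝ] ℝ)) p := fun k => hasFDerivAt_apply k p
  -- pd of the four components of S (in normalized form)
  have e0 : ∀ c, pd (fun q : Fin 4 → ℝ => q 0 * q 0) c p
      = 2 * p 0 * (Pi.single c 1 : Fin 4 → ℝ) 0 := by
    intro c
    rw [pd_eq (f := fun q : Fin 4 → ℝ => q 0 * q 0) ((hq 0).mul (hq 0))]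
    simp only [ContinuousLinearMap.add_apply, ContinuousLinearMap.coe_smul', ContinuousLinearMap.neg_apply, ContinuousLinearMap.smul_apply, Pi.smul_apply, smul_eq_mul, ContinuousLinearMap.proj_apply]
    try ring
  have e1 : ∀ c, pd (fun q : Fin 4 → ℝ =>
      -ζ * Real.log (q 0) + (q 2 * q 2 + q 3 * q 3) * 2⁻¹) c p
      = -ζ * (p 0)⁻¹ * (Pi.single c 1 : Fin 4 → ℝ) 0 + p 2 * (Pi.single c 1 : Fin 4 → ℝ) 2
        + p 3 * (Pi.single c 1 : Fin 4 → ℝ) 3 := by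
    intro c
    rw [pd_eq (f := fun q : Fin 4 → ℝ => -ζ * Real.log (q 0) + (q 2 * q 2 + q 3 * q 3) * 2⁻¹) ((((hq 0).log hu).const_mul (-ζ)).add
      ((((hq 2).mul (hq 2)).add ((hq 3).mul (hq 3))).mul_const (2⁻¹ : ℝ)))]
    simp only [ContinuousLinearMap.add_apply, ContinuousLinearMap.coe_smul', ContinuousLinearMap.neg_apply, ContinuousLinearMap.smul_apply, Pi.smul_apply, smul_eq_mul, ContinuousLinearMap.proj_apply]
    try ring
  have e2 : ∀ c, pd (fun q : Fin 4 → ℝ => q 0 * q 2) c p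
      = p 0 * (Pi.single c 1 : Fin 4 → ℝ) 2 + p 2 * (Pi.single c 1 : Fin 4 → ℝ) 0 := by
    intro c
    rw [pd_eq (f := fun q : Fin 4 → ℝ => q 0 * q 2) ((hq 0).mul (hq 2))]
    simp only [ContinuousLinearMap.add_apply, ContinuousLinearMap.coe_smul', ContinuousLinearMap.neg_apply, ContinuousLinearMap.smul_apply, Pi.smul_apply, smul_eq_mul, ContinuousLinearMap.proj_apply]
    try ring
  have e3 : ∀ c, pd (fun q : Fin 4 → ℝ => q 0 * q 3) c p
      = p 0 * (Pi.single c 1 : Fin 4 → ℝ) 3 + p 3 * (Pi.single c 1 : Fin 4 → ℝ) 0 := by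
    intro c
    rw [pd_eq (f := fun q : Fin 4 → ℝ => q 0 * q 3) ((hq 0).mul (hq 3))]
    simp only [ContinuousLinearMap.add_apply, ContinuousLinearMap.coe_smul', ContinuousLinearMap.neg_apply, ContinuousLinearMap.smul_apply, Pi.smul_apply, smul_eq_mul, ContinuousLinearMap.proj_apply]
    try ring
  -- pd of g_{00}
  have eg : ∀ c, pd (fun q : Fin 4 → ℝ =>
      -2 * (ζ * 2⁻¹ * (q 0 * q 0)⁻¹ * Real.log (q 2 * q 2 + q 3 * q 3))) c p
      = 2 * ζ * (p 0 * p 0 * p 0)⁻¹ * Real.log (p 2 * p 2 + p 3 * p 3)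
          * (Pi.single c 1 : Fin 4 → ℝ) 0
        - 2 * ζ * (p 0 * p 0)⁻¹ * (p 2 * p 2 + p 3 * p 3)⁻¹
          * (p 2 * (Pi.single c 1 : Fin 4 → ℝ) 2 + p 3 * (Pi.single c 1 : Fin 4 → ℝ) 3) := by
    intro c
    rw [pd_eq (f := fun q : Fin 4 → ℝ => -2 * (ζ * 2⁻¹ * (q 0 * q 0)⁻¹ * Real.log (q 2 * q 2 + q 3 * q 3))) ((((hasFDerivAt_inv_comp ((hq 0).mul (hq 0)) hsq).const_mul
        (ζ * 2⁻¹)).mul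
        ((((hq 2).mul (hq 2)).add ((hq 3).mul (hq 3))).log hr')).const_mul (-2))]
    simp only [ContinuousLinearMap.add_apply, ContinuousLinearMap.coe_smul', ContinuousLinearMap.neg_apply, ContinuousLinearMap.smul_apply, Pi.smul_apply, smul_eq_mul, ContinuousLinearMap.proj_apply, Pi.mul_apply, Pi.add_apply]
    field_simp
    ring
  have hfin : ∀ k : Fin 4, k = 0 ∨ k = 1 ∨ k = 2 ∨ k = 3 := by decide
  intro i j
  rcases hfin i with rfl | rfl | rfl | rfl <;> rcases hfin j with rfl | rfl | rfl | rfl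
  all_goals
    simp only [lieDeriv, ppMetric, Fin.sum_univ_four, Real.log_abs, pow_two,
      div_eq_mul_inv, Matrix.cons_val_zero, Matrix.cons_val_one, Matrix.head_cons,
      Matrix.cons_val_two, Matrix.tail_cons, Matrix.cons_val_three, Matrix.cons_val_fin_one,
      Fin.isValue, Fin.reduceEq, and_self, and_true, true_and, and_false, false_and,
      or_false, false_or, or_self, if_true, if_false, reduceIte]
  all_goals
    simp only [e0, e1, e2, e3, eg, pd_const, Pi.single_apply, Fin.reduceEq, reduceIte,
      if_true, if_false]
  all_goals
    field_simp
  all_goals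
    ring
end

section
/- Let A, B, C, c₂, c₃ : ℝ → ℝ be smooth, and let H(u,y,z) = (1/2)·(A(u)y² + 2B(u)yz + C(u)z²). Suppose that for all u: c₂''(u) + A(u)c₂(u) + B(u)c₃(u) = 0 and c₃''(u) + B(u)c₂(u) + C(u)c₃(u) = 0. Then the vector field X = c₂(u)∂_y + c₃(u)∂_z + (c₂'(u)·y + c₃'(u)·z)·∂_v is a Killing vector of the plane-wave pp-wave metric g_H, i.e. ℒ_X g_H = 0. -/
lemma hproj (i : Fin 4) (p : Fin 4 → ℝ) :
    HasFDerivAt (fun q : Fin 4 → ℝ => q i) (ContinuousLinearMap.proj (R := ℝ) (φ := fun _ : Fin 4 => ℝ) i : (Fin 4 → ℝ) →L[ℝ] ℝ) p :=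
  (ContinuousLinearMap.proj (R := ℝ) (φ := fun _ : Fin 4 => ℝ) i : (Fin 4 → ℝ) →L[ℝ] ℝ).hasFDerivAt

lemma hf0 (f : ℝ → ℝ) (hf : Differentiable ℝ f) (p : Fin 4 → ℝ) :
    HasFDerivAt (fun q : Fin 4 → ℝ => f (q 0))
      (deriv f (p 0) • (ContinuousLinearMap.proj (R := ℝ) (φ := fun _ : Fin 4 => ℝ) 0 : (Fin 4 → ℝ) →L[ℝ] ℝ)) p :=
  (hf.differentiableAt.hasDerivAt).comp_hasFDerivAt p (hproj 0 p)

lemma pd_f0 (f : ℝ → ℝ) (hf : Differentiable ℝ f) (c : Fin 4) (p : Fin 4 → ℝ) :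
    pd (fun q : Fin 4 → ℝ => f (q 0)) c p = if c = 0 then deriv f (p 0) else 0 := by
  rw [pd_eq (hf0 f hf p) c]
  fin_cases c <;> simp [Pi.single_apply]

lemma pd_X1 (f g : ℝ → ℝ) (hf : Differentiable ℝ f) (hg : Differentiable ℝ g)
    (c : Fin 4) (p : Fin 4 → ℝ) :
    pd (fun q : Fin 4 → ℝ => f (q 0) * q 2 + g (q 0) * q 3) c p
      = (if c = 0 then deriv f (p 0) * p 2 + deriv g (p 0) * p 3 else 0)
        + (if c = 2 then f (p 0) else 0) + (if c = 3 then g (p 0) else 0) := by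
  rw [pd_eq (f := fun q : Fin 4 → ℝ => f (q 0) * q 2 + g (q 0) * q 3) (((hf0 f hf p).mul (hproj 2 p)).add ((hf0 g hg p).mul (hproj 3 p))) c]
  fin_cases c <;> simp [Pi.single_apply] <;> ring

lemma pd_g00_s19 (A B C : ℝ → ℝ) (hA : Differentiable ℝ A) (hB : Differentiable ℝ B)
    (hC : Differentiable ℝ C) (c : Fin 4) (p : Fin 4 → ℝ) :
    pd (fun q : Fin 4 → ℝ =>
        (-1) * (A (q 0) * q 2 * q 2 + (2 * (B (q 0) * q 2 * q 3) + C (q 0) * q 3 * q 3))) c p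
      = (if c = 0 then -(deriv A (p 0) * p 2 ^ 2 + 2 * deriv B (p 0) * p 2 * p 3
            + deriv C (p 0) * p 3 ^ 2) else 0)
        + (if c = 2 then -(2 * A (p 0) * p 2 + 2 * B (p 0) * p 3) else 0)
        + (if c = 3 then -(2 * B (p 0) * p 2 + 2 * C (p 0) * p 3) else 0) := by
  have hA1 := ((hf0 A hA p).mul (hproj 2 p)).mul (hproj 2 p)
  have hB1 := ((hf0 B hB p).mul (hproj 2 p)).mul (hproj 3 p)
  have hC1 := ((hf0 C hC p).mul (hproj 3 p)).mul (hproj 3 p)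
  rw [pd_eq (f := fun q : Fin 4 → ℝ =>
      (-1) * (A (q 0) * q 2 * q 2 + (2 * (B (q 0) * q 2 * q 3) + C (q 0) * q 3 * q 3))) ((hA1.add ((hB1.const_mul 2).add hC1)).const_mul (-1)) c]
  fin_cases c <;> simp [Pi.single_apply] <;> ring

/-- for the plane wave H = (A(u)y² + 2B(u)yz + C(u)z²)/2, if
c₂'' + Ac₂ + Bc₃ = 0 and c₃'' + Bc₂ + Cc₃ = 0, then
X = c₂∂_y + c₃∂_z + (c₂'y + c₃'z)∂_v is a Killing vector of g_H. -/
theorem killing_vector_plane_wave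
    (A B C c₂ c₃ : ℝ → ℝ)
    (hA : ContDiff ℝ (⊤ : ℕ∞) A) (hB : ContDiff ℝ (⊤ : ℕ∞) B) (hC : ContDiff ℝ (⊤ : ℕ∞) C)
    (hc₂ : ContDiff ℝ (⊤ : ℕ∞) c₂) (hc₃ : ContDiff ℝ (⊤ : ℕ∞) c₃)
    (H : (Fin 3 → ℝ) → ℝ)
    (hH : H = fun q => (1 / 2) * (A (q 0) * (q 1) ^ 2 + 2 * B (q 0) * q 1 * q 2
        + C (q 0) * (q 2) ^ 2))
    (h2 : ∀ u, deriv (deriv c₂) u + A u * c₂ u + B u * c₃ u = 0)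
    (h3 : ∀ u, deriv (deriv c₃) u + B u * c₂ u + C u * c₃ u = 0)
    (X : (Fin 4 → ℝ) → (Fin 4 → ℝ))
    (hX : X = fun p => ![0,
        deriv c₂ (p 0) * p 2 + deriv c₃ (p 0) * p 3,
        c₂ (p 0), c₃ (p 0)]) :
    ∀ p i j, lieDeriv X (ppMetric H) p i j = 0 := by
  have hA' : Differentiable ℝ A := hA.differentiable (by simp)
  have hB' : Differentiable ℝ B := hB.differentiable (by simp)
  have hC' : Differentiable ℝ C := hC.differentiable (by simp)
  have hc₂d : Differentiable ℝ c₂ := hc₂.differentiable (by simp)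
  have hc₃d : Differentiable ℝ c₃ := hc₃.differentiable (by simp)
  have hc₂' : Differentiable ℝ (deriv c₂) :=
    ((contDiff_infty_iff_deriv.mp (hc₂.of_le (by simp))).2).differentiable (by simp)
  have hc₃' : Differentiable ℝ (deriv c₃) :=
    ((contDiff_infty_iff_deriv.mp (hc₃.of_le (by simp))).2).differentiable (by simp)
  have e0 : (fun q : Fin 4 → ℝ => X q 0) = fun _ => (0 : ℝ) := by funext q; simp [hX]
  have e1 : (fun q : Fin 4 → ℝ => X q 1)
      = fun q => deriv c₂ (q 0) * q 2 + deriv c₃ (q 0) * q 3 := by funext q; simp [hX]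
  have e2 : (fun q : Fin 4 → ℝ => X q 2) = fun q => c₂ (q 0) := by funext q; simp [hX]
  have e3 : (fun q : Fin 4 → ℝ => X q 3) = fun q => c₃ (q 0) := by funext q; simp [hX]
  have eg : (fun q : Fin 4 → ℝ => ppMetric H q 0 0) = fun q =>
      (-1) * (A (q 0) * q 2 * q 2 + (2 * (B (q 0) * q 2 * q 3) + C (q 0) * q 3 * q 3)) := by
    funext q; simp [ppMetric, hH]; ring
  have egc : ∀ (i j : Fin 4), ¬(i = 0 ∧ j = 0) → ∀ (c : Fin 4) (p : Fin 4 → ℝ),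
      pd (fun q => ppMetric H q i j) c p = 0 := by
    intro i j hij c p
    have h : (fun q : Fin 4 → ℝ => ppMetric H q i j)
        = fun _ => ppMetric H (fun _ => 0) i j := by
      funext q; unfold ppMetric; rw [if_neg hij, if_neg hij]
    rw [h, pd_const]
  intro p i j
  rw [lieDeriv, Fin.sum_univ_four, Fin.sum_univ_four, Fin.sum_univ_four, e0, e1, e2, e3]
  simp only [pd_const, pd_X1 _ _ hc₂' hc₃', pd_f0 c₂ hc₂d, pd_f0 c₃ hc₃d]
  by_cases hij : i = 0 ∧ j = 0
  · obtain ⟨hi, hj⟩ := hij; subst hi; subst hj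
    rw [eg]
    simp only [pd_g00_s19 A B C hA' hB' hC']
    simp [ppMetric, hX, hH]
    ring_nf
    linear_combination (-2 * p 2) * h2 (p 0) + (-2 * p 3) * h3 (p 0)
  · simp only [egc i j hij]
    fin_cases i <;> fin_cases j <;> simp [ppMetric, hX] <;> exact absurd ⟨rfl, rfl⟩ hij
end
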